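/- arXiv:1404.2114 — 5 statements merged into one kernel-verified Lean document; each statement's English description precedes it below -/
import Mathlib

section
/- Determinism, Value Definiteness, Noncontextuality and the Identification Principle are mutually exclusive. Precisely: there do not exist a type X, a surjective function A : X → 𝓕 (where 𝓕 is the set of all frames in ℝ³), a function F : X → T, a type X_Z, functions Z : X → X_Z and F̂ : 𝓕 × X_Z → T such that F(x) = F̂(A(x), Z(x)) for all x ∈ X, and such that for every z ∈ X_Z the function λ_z : 𝓕 → T defined by λ_z(𝐚) := F̂(𝐚, z) is a frame function on 𝓕. -/
noncomputable section

/-- Euclidean ℝ³. -/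
abbrev V3 : Type := EuclideanSpace ℝ (Fin 3)

/-- A frame in ℝ³: an ordered orthonormal basis. -/
abbrev Frame : Type := {a : Fin 3 → V3 // Orthonormal ℝ a}

/-- Two unit vectors span the same line iff they are equal up to sign. -/
def SameLine (u v : V3) : Prop := u = v ∨ u = -v

/-- The set T = {(1,1,0),(1,0,1),(0,1,1)} of possible outcome triples. -/
def Tset : Set (Fin 3 → ℕ) := {![1, 1, 0], ![1, 0, 1], ![0, 1, 1]}



open RealInnerProductSpace

set_option maxHeartbeats 2000000

/-! ### Auxiliary geometry: frames from integer vectors -/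

abbrev ZV := Fin 3 → ℤ

def dotZ (a b : ZV) : ℤ := a 0 * b 0 + a 1 * b 1 + a 2 * b 2

def iv (v : ZV) : V3 := (WithLp.equiv 2 (Fin 3 → ℝ)).symm (fun i => (v i : ℝ))

def nv (v : ZV) : V3 := ‖iv v‖⁻¹ • iv v

lemma inner_iv (a b : ZV) : ⟪iv a, iv b⟫ = ((dotZ a b : ℤ) : ℝ) := by
  rw [PiLp.inner_apply]
  simp only [iv, WithLp.equiv_symm_apply, PiLp.toLp_apply, RCLike.inner_apply, conj_trivial,
    Fin.sum_univ_three, dotZ]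
  push_cast
  ring

lemma norm_nv {v : ZV} (hv : dotZ v v ≠ 0) : ‖nv v‖ = 1 := by
  have h0 : iv v ≠ 0 := by
    intro h
    apply hv
    have := inner_iv v v
    rw [h, inner_zero_left] at this
    exact_mod_cast this.symm
  have hn : ‖iv v‖ ≠ 0 := norm_ne_zero_iff.mpr h0
  rw [nv, norm_smul]
  simp [abs_of_nonneg (inv_nonneg.mpr (norm_nonneg _)), inv_mul_cancel₀ hn]

lemma inner_nv_eq_zero {a b : ZV} (h : dotZ a b = 0) : ⟪nv a, nv b⟫ = 0 := by
  rw [nv, nv, real_inner_smul_left, real_inner_smul_right, inner_iv, h]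
  simp

lemma dotZ_comm (a b : ZV) : dotZ a b = dotZ b a := by rw [dotZ, dotZ]; ring

lemma orthonormal_mk (u v w : ZV) (hu : dotZ u u ≠ 0) (hv : dotZ v v ≠ 0)
    (hw : dotZ w w ≠ 0) (huv : dotZ u v = 0) (huw : dotZ u w = 0) (hvw : dotZ v w = 0) :
    Orthonormal ℝ ![nv u, nv v, nv w] := by
  have h1 : ∀ a : ZV, dotZ a a ≠ 0 → ⟪nv a, nv a⟫ = 1 := fun a ha => by
    rw [real_inner_self_eq_norm_sq, norm_nv ha]; norm_num
  rw [orthonormal_iff_ite]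
  intro i j
  fin_cases i <;> fin_cases j <;>
    simp only [Matrix.cons_val_zero, Matrix.cons_val_one, Matrix.head_cons, Fin.mk_zero,
      Fin.mk_one, Matrix.cons_val_two, Matrix.tail_cons, Fin.isValue, if_true, if_false,
      Fin.zero_eta, Fin.reduceEq, ite_true, ite_false] <;>
    first
      | exact h1 _ ‹_›
      | exact inner_nv_eq_zero ‹_›
      | exact inner_nv_eq_zero (dotZ_comm _ _ ▸ huv)
      | exact inner_nv_eq_zero (dotZ_comm _ _ ▸ huw)
      | exact inner_nv_eq_zero (dotZ_comm _ _ ▸ hvw)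

def mkF (u v w : ZV) (hu : dotZ u u ≠ 0) (hv : dotZ v v ≠ 0) (hw : dotZ w w ≠ 0)
    (huv : dotZ u v = 0) (huw : dotZ u w = 0) (hvw : dotZ v w = 0) : Frame :=
  ⟨![nv u, nv v, nv w], orthonormal_mk u v w hu hv hw huv huw hvw⟩

def stdF : Frame := mkF ![1,0,0] ![0,1,0] ![0,0,1]
  (by decide) (by decide) (by decide) (by decide) (by decide) (by decide)

/-! ### The 59 directions and 42 orthonormal triples of the Kochen–Specker configuration -/

def vec0 : ZV := ![1, 1, 0]
def vec1 : ZV := ![1, -1, -2]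
def vec2 : ZV := ![1, -1, 1]
def vec3 : ZV := ![1, 0, -1]
def vec4 : ZV := ![1, 2, 1]
def vec5 : ZV := ![0, 1, 0]
def vec6 : ZV := ![1, 0, 1]
def vec7 : ZV := ![1, -1, -1]
def vec8 : ZV := ![1, -1, 2]
def vec9 : ZV := ![1, 2, -1]
def vec10 : ZV := ![2, 0, -1]
def vec11 : ZV := ![1, 0, 2]
def vec12 : ZV := ![1, 5, 2]
def vec13 : ZV := ![2, 0, 1]
def vec14 : ZV := ![1, 0, -2]
def vec15 : ZV := ![1, 5, -2]
def vec16 : ZV := ![0, 0, 1]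
def vec17 : ZV := ![1, 0, 0]
def vec18 : ZV := ![1, -1, 0]
def vec19 : ZV := ![0, 1, -2]
def vec20 : ZV := ![0, 2, 1]
def vec21 : ZV := ![5, -2, -1]
def vec22 : ZV := ![5, 1, -2]
def vec23 : ZV := ![0, 1, -1]
def vec24 : ZV := ![0, 1, 1]
def vec25 : ZV := ![2, 1, -1]
def vec26 : ZV := ![2, 1, 1]
def vec27 : ZV := ![2, -5, -1]
def vec28 : ZV := ![2, -5, 1]
def vec29 : ZV := ![1, 1, -1]
def vec30 : ZV := ![1, -2, -1]
def vec31 : ZV := ![2, -1, 1]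
def vec32 : ZV := ![1, 1, 2]
def vec33 : ZV := ![2, 5, 1]
def vec34 : ZV := ![5, 2, 1]
def vec35 : ZV := ![0, 2, -1]
def vec36 : ZV := ![0, 1, 2]
def vec37 : ZV := ![5, -2, 1]
def vec38 : ZV := ![5, -1, -2]
def vec39 : ZV := ![5, 1, 2]
def vec40 : ZV := ![1, 1, 1]
def vec41 : ZV := ![1, -2, 1]
def vec42 : ZV := ![1, 1, -2]
def vec43 : ZV := ![2, -1, -1]
def vec44 : ZV := ![2, 5, -1]
def vec45 : ZV := ![5, -1, 2]
def vec46 : ZV := ![5, 2, -1]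
def vec47 : ZV := ![1, 2, -2]
def vec48 : ZV := ![2, -5, -4]
def vec49 : ZV := ![2, -2, -1]
def vec50 : ZV := ![2, 1, 2]
def vec51 : ZV := ![1, -4, 1]
def vec52 : ZV := ![1, -1, 4]
def vec53 : ZV := ![1, 2, 2]
def vec54 : ZV := ![2, -5, 4]
def vec55 : ZV := ![2, -2, 1]
def vec56 : ZV := ![2, 1, -2]
def vec57 : ZV := ![1, -4, -1]
def vec58 : ZV := ![1, -1, -4]

def fr0 : Frame := mkF vec0 vec1 vec2 (by decide) (by decide) (by decide) (by decide) (by decide) (by decide)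
def fr1 : Frame := mkF vec0 vec7 vec8 (by decide) (by decide) (by decide) (by decide) (by decide) (by decide)
def fr2 : Frame := mkF vec0 vec16 vec18 (by decide) (by decide) (by decide) (by decide) (by decide) (by decide)
def fr3 : Frame := mkF vec0 vec49 vec52 (by decide) (by decide) (by decide) (by decide) (by decide) (by decide)
def fr4 : Frame := mkF vec0 vec55 vec58 (by decide) (by decide) (by decide) (by decide) (by decide) (by decide)
def fr5 : Frame := mkF vec1 vec13 vec15 (by decide) (by decide) (by decide) (by decide) (by decide) (by decide)
def fr6 : Frame := mkF vec1 vec35 vec39 (by decide) (by decide) (by decide) (by decide) (by decide) (by decide)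
def fr7 : Frame := mkF vec2 vec3 vec4 (by decide) (by decide) (by decide) (by decide) (by decide) (by decide)
def fr8 : Frame := mkF vec2 vec24 vec25 (by decide) (by decide) (by decide) (by decide) (by decide) (by decide)
def fr9 : Frame := mkF vec3 vec5 vec6 (by decide) (by decide) (by decide) (by decide) (by decide) (by decide)
def fr10 : Frame := mkF vec3 vec40 vec41 (by decide) (by decide) (by decide) (by decide) (by decide) (by decide)
def fr11 : Frame := mkF vec3 vec50 vec51 (by decide) (by decide) (by decide) (by decide) (by decide) (by decide)
def fr12 : Frame := mkF vec4 vec19 vec21 (by decide) (by decide) (by decide) (by decide) (by decide) (by decide)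
def fr13 : Frame := mkF vec5 vec10 vec11 (by decide) (by decide) (by decide) (by decide) (by decide) (by decide)
def fr14 : Frame := mkF vec5 vec13 vec14 (by decide) (by decide) (by decide) (by decide) (by decide) (by decide)
def fr15 : Frame := mkF vec5 vec16 vec17 (by decide) (by decide) (by decide) (by decide) (by decide) (by decide)
def fr16 : Frame := mkF vec6 vec7 vec9 (by decide) (by decide) (by decide) (by decide) (by decide) (by decide)
def fr17 : Frame := mkF vec6 vec29 vec30 (by decide) (by decide) (by decide) (by decide) (by decide) (by decide)
def fr18 : Frame := mkF vec6 vec56 vec57 (by decide) (by decide) (by decide) (by decide) (by decide) (by decide)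
def fr19 : Frame := mkF vec7 vec23 vec26 (by decide) (by decide) (by decide) (by decide) (by decide) (by decide)
def fr20 : Frame := mkF vec8 vec10 vec12 (by decide) (by decide) (by decide) (by decide) (by decide) (by decide)
def fr21 : Frame := mkF vec8 vec20 vec22 (by decide) (by decide) (by decide) (by decide) (by decide) (by decide)
def fr22 : Frame := mkF vec9 vec36 vec37 (by decide) (by decide) (by decide) (by decide) (by decide) (by decide)
def fr23 : Frame := mkF vec10 vec53 vec54 (by decide) (by decide) (by decide) (by decide) (by decide) (by decide)
def fr24 : Frame := mkF vec11 vec25 vec27 (by decide) (by decide) (by decide) (by decide) (by decide) (by decide)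
def fr25 : Frame := mkF vec11 vec43 vec44 (by decide) (by decide) (by decide) (by decide) (by decide) (by decide)
def fr26 : Frame := mkF vec13 vec47 vec48 (by decide) (by decide) (by decide) (by decide) (by decide) (by decide)
def fr27 : Frame := mkF vec14 vec26 vec28 (by decide) (by decide) (by decide) (by decide) (by decide) (by decide)
def fr28 : Frame := mkF vec14 vec31 vec33 (by decide) (by decide) (by decide) (by decide) (by decide) (by decide)
def fr29 : Frame := mkF vec17 vec19 vec20 (by decide) (by decide) (by decide) (by decide) (by decide) (by decide)
def fr30 : Frame := mkF vec17 vec23 vec24 (by decide) (by decide) (by decide) (by decide) (by decide) (by decide)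
def fr31 : Frame := mkF vec17 vec35 vec36 (by decide) (by decide) (by decide) (by decide) (by decide) (by decide)
def fr32 : Frame := mkF vec18 vec29 vec32 (by decide) (by decide) (by decide) (by decide) (by decide) (by decide)
def fr33 : Frame := mkF vec18 vec40 vec42 (by decide) (by decide) (by decide) (by decide) (by decide) (by decide)
def fr34 : Frame := mkF vec19 vec30 vec34 (by decide) (by decide) (by decide) (by decide) (by decide) (by decide)
def fr35 : Frame := mkF vec20 vec42 vec45 (by decide) (by decide) (by decide) (by decide) (by decide) (by decide)
def fr36 : Frame := mkF vec23 vec40 vec43 (by decide) (by decide) (by decide) (by decide) (by decide) (by decide)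
def fr37 : Frame := mkF vec24 vec29 vec31 (by decide) (by decide) (by decide) (by decide) (by decide) (by decide)
def fr38 : Frame := mkF vec32 vec35 vec38 (by decide) (by decide) (by decide) (by decide) (by decide) (by decide)
def fr39 : Frame := mkF vec36 vec41 vec46 (by decide) (by decide) (by decide) (by decide) (by decide) (by decide)
def fr40 : Frame := mkF vec47 vec49 vec50 (by decide) (by decide) (by decide) (by decide) (by decide) (by decide)
def fr41 : Frame := mkF vec53 vec55 vec56 (by decide) (by decide) (by decide) (by decide) (by decide) (by decide)

/-! ### Combinatorial core: the configuration admits no {0,1}-coloring with exactly one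
zero in each triple.  Verified by an exhaustive (pruned) search evaluated by `decide`. -/

def bitv (m : Nat) (i : Nat) : Nat := cond (m.testBit i) 1 0

def tOK (m : Nat) : Nat × Nat × Nat → Bool
  | (i, j, k) => bitv m i + bitv m j + bitv m k == 1

def tAM (m : Nat) : Nat × Nat × Nat → Bool
  | (i, j, k) => bitv m i + bitv m j + bitv m k ≤ 1

def cv (c : Nat → Bool) (i : Nat) : Nat := cond (c i) 1 0

def tOKc (c : Nat → Bool) : Nat × Nat × Nat → Prop
  | (i, j, k) => cv c i + cv c j + cv c k = 1

def KTriples : List (Nat × Nat × Nat) := [(0, 1, 2), (0, 7, 8), (0, 16, 18), (0, 49, 52), (0, 55, 58), (1, 13, 15), (1, 35, 39), (2, 3, 4), (2, 24, 25), (3, 5, 6), (3, 40, 41), (3, 50, 51), (4, 19, 21), (5, 10, 11), (5, 13, 14), (5, 16, 17), (6, 7, 9), (6, 29, 30), (6, 56, 57), (7, 23, 26), (8, 10, 12), (8, 20, 22), (9, 36, 37), (10, 53, 54), (11, 25, 27), (11, 43, 44), (13, 47, 48), (14, 26, 28), (14, 31, 33), (17, 19, 20), (17, 23, 24), (17, 35,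 36), (18, 29, 32), (18, 40, 42), (19, 30, 34), (20, 42, 45), (23, 40, 43), (24, 29, 31), (32, 35, 38), (36, 41, 46), (47, 49, 50), (53, 55, 56)]

def TBL : List (List (Nat × Nat × Nat)) := [[],
  [],
  [],
  [(0, 1, 2)],
  [],
  [(2, 3, 4)],
  [],
  [(3, 5, 6)],
  [],
  [(0, 7, 8)],
  [(6, 7, 9)],
  [],
  [(5, 10, 11)],
  [(8, 10, 12)],
  [],
  [(5, 13, 14)],
  [(1, 13, 15)],
  [],
  [(5, 16, 17)],
  [(0, 16, 18)],
  [],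
  [(17, 19, 20)],
  [(4, 19, 21)],
  [(8, 20, 22)],
  [],
  [(17, 23, 24)],
  [(2, 24, 25)],
  [(7, 23, 26)],
  [(11, 25, 27)],
  [(14, 26, 28)],
  [],
  [(6, 29, 30)],
  [(24, 29, 31)],
  [(18, 29, 32)],
  [(14, 31, 33)],
  [(19, 30, 34)],
  [],
  [(17, 35, 36)],
  [(9, 36, 37)],
  [(32, 35, 38)],
  [(1, 35, 39)],
  [],
  [(3, 40, 41)],
  [(18, 40, 42)],
  [(23, 40, 43)],
  [(11, 43, 44)],
  [(20, 42, 45)],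
  [(36, 41, 46)],
  [],
  [(13, 47, 48)],
  [],
  [(47, 49, 50)],
  [(3, 50, 51)],
  [(0, 49, 52)],
  [],
  [(10, 53, 54)],
  [],
  [(53, 55, 56)],
  [(6, 56, 57)],
  [(0, 55, 58)]]

def PBL : List (List (Nat × Nat × Nat)) := [[],
  [],
  [(0, 1, 2)],
  [],
  [(2, 3, 4)],
  [],
  [(3, 5, 6)],
  [],
  [(0, 7, 8), (6, 7, 9)],
  [],
  [],
  [(5, 10, 11), (8, 10, 12)],
  [],
  [],
  [(1, 13, 15), (5, 13, 14)],
  [],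
  [],
  [(0, 16, 18), (5, 16, 17)],
  [],
  [],
  [(4, 19, 21), (17, 19, 20)],
  [(8, 20, 22)],
  [],
  [],
  [(7, 23, 26), (17, 23, 24)],
  [(2, 24, 25)],
  [(11, 25, 27)],
  [(14, 26, 28)],
  [],
  [],
  [(6, 29, 30), (18, 29, 32), (24, 29, 31)],
  [(19, 30, 34)],
  [(14, 31, 33)],
  [],
  [],
  [],
  [(1, 35, 39), (17, 35, 36), (32, 35, 38)],
  [(9, 36, 37)],
  [],
  [],
  [],
  [(3, 40, 41), (18, 40, 42), (23, 40, 43)],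
  [(36, 41, 46)],
  [(20, 42, 45)],
  [(11, 43, 44)],
  [],
  [],
  [],
  [(13, 47, 48)],
  [],
  [(0, 49, 52), (47, 49, 50)],
  [(3, 50, 51)],
  [],
  [],
  [(10, 53, 54)],
  [],
  [(0, 55, 58), (53, 55, 56)],
  [(6, 56, 57)],
  [],
  []]

def NV : Nat := 59

def ok (d m : Nat) : Bool := (TBL.getD d []).all (tOK m) && (PBL.getD d []).all (tAM m)

def go : Nat → Nat → Nat → Bool
  | 0, d, m => !(ok d m)
  | f+1, d, m => !(ok d m) || (go f (d+1) m && go f (d+1) (m ||| 2^d))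

lemma hTB : ∀ e ∈ List.range (NV+1), ∀ p ∈ TBL.getD e [],
    p ∈ KTriples ∧ p.1 < e ∧ p.2.1 < e ∧ p.2.2 < e := by decide

lemma hPB : ∀ e ∈ List.range (NV+1), ∀ p ∈ PBL.getD e [],
    p ∈ KTriples ∧ p.1 < e ∧ p.2.1 < e ∧ e ≤ p.2.2 := by decide

lemma hgo : go NV 0 0 = true := by decide

lemma ok_true (c : Nat → Bool) (hsat : ∀ p ∈ KTriples, tOKc c p)
    (d m : Nat) (hag : ∀ i, i < d → m.testBit i = c i)
    (hz : ∀ i, d ≤ i → m.testBit i = false) : ok d m = true := by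
  by_cases hd : d < NV + 1
  · have hd' := List.mem_range.mpr hd
    rw [ok, Bool.and_eq_true, List.all_eq_true, List.all_eq_true]
    constructor
    · rintro ⟨i, j, k⟩ hp
      obtain ⟨hmem, hi, hj, hk⟩ := hTB d hd' _ hp
      have hs := hsat _ hmem
      simp only [tOK, tOKc, bitv, cv, hag i hi, hag j hj, hag k hk] at hs ⊢
      cases hci : c i <;> cases hcj : c j <;> cases hck : c k <;> simp_all
    · rintro ⟨i, j, k⟩ hp
      obtain ⟨hmem, hi, hj, hk⟩ := hPB d hd' _ hp
      have hs := hsat _ hmem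
      simp only [tAM, tOKc, bitv, cv, hag i hi, hag j hj, hz k hk] at hs ⊢
      cases hci : c i <;> cases hcj : c j <;> cases hck : c k <;> simp_all
  · have h1 : TBL.getD d [] = [] := by
      apply List.getD_eq_default
      have : TBL.length = NV + 1 := rfl
      omega
    have h2 : PBL.getD d [] = [] := by
      apply List.getD_eq_default
      have : PBL.length = NV + 1 := rfl
      omega
    rw [ok, h1, h2]
    rfl

lemma go_spec (c : Nat → Bool) (hsat : ∀ p ∈ KTriples, tOKc c p) :
    ∀ fuel d m, (∀ i, i < d → m.testBit i = c i) → (∀ i, d ≤ i → m.testBit i = false) →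
      go fuel d m = true → False := by
  intro fuel
  induction fuel with
  | zero =>
    intro d m hag hz hgo
    rw [go, ok_true c hsat d m hag hz] at hgo
    exact Bool.false_ne_true hgo
  | succ f ih =>
    intro d m hag hz hgo
    rw [go, ok_true c hsat d m hag hz] at hgo
    simp only [Bool.not_true, Bool.false_or, Bool.and_eq_true] at hgo
    obtain ⟨h0, h1⟩ := hgo
    cases hcd : c d
    · refine ih (d+1) m ?_ ?_ h0
      · intro i hi
        rcases Nat.lt_succ_iff_lt_or_eq.mp hi with h | rfl
        · exact hag i h
        · rw [hz i le_rfl, hcd]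
      · intro i hi
        exact hz i (by omega)
    · refine ih (d+1) (m ||| 2^d) ?_ ?_ h1
      · intro i hi
        rw [Nat.testBit_lor]
        rcases Nat.lt_succ_iff_lt_or_eq.mp hi with h | rfl
        · rw [hag i h, Nat.testBit_two_pow_of_ne (by omega), Bool.or_false]
        · rw [Nat.testBit_two_pow_self, hcd, Bool.or_true]
      · intro i hi
        rw [Nat.testBit_lor, hz i (by omega), Nat.testBit_two_pow_of_ne (by omega)]
        rfl

lemma noColoring (c : Nat → Bool) (hsat : ∀ p ∈ KTriples, tOKc c p) : False :=
  go_spec c hsat NV 0 0 (fun i hi => absurd hi (Nat.not_lt_zero i))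
    (fun i _ => Nat.zero_testBit i) hgo


/-! ### Values attached to the directions by a frame function -/

lemma tpat {v : Fin 3 → ℕ} (h : v ∈ Tset) :
    ((v 0 == 0) = false ∧ (v 1 == 0) = false ∧ (v 2 == 0) = true) ∨
    ((v 0 == 0) = false ∧ (v 1 == 0) = true ∧ (v 2 == 0) = false) ∨
    ((v 0 == 0) = true ∧ (v 1 == 0) = false ∧ (v 2 == 0) = false) := by
  simp only [Tset, Set.mem_insert_iff, Set.mem_singleton_iff] at h
  rcases h with h | h | h <;> subst h
  · exact Or.inl ⟨rfl, rfl, rfl⟩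
  · exact Or.inr (Or.inl ⟨rfl, rfl, rfl⟩)
  · exact Or.inr (Or.inr ⟨rfl, rfl, rfl⟩)

def valList (lam : Frame → ↥Tset) : List Bool :=
  [((lam fr0).1 0 == 0), ((lam fr0).1 1 == 0), ((lam fr0).1 2 == 0), ((lam fr7).1 1 == 0), ((lam fr7).1 2 == 0), ((lam fr9).1 1 == 0), ((lam fr9).1 2 == 0), ((lam fr1).1 1 == 0), ((lam fr1).1 2 == 0), ((lam fr16).1 2 == 0), ((lam fr13).1 1 == 0), ((lam fr13).1 2 == 0), ((lam fr20).1 2 == 0), ((lam fr5).1 1 == 0), ((lam fr14).1 2 == 0), ((lam fr5).1 2 == 0), ((lam fr2).1 1 == 0), ((lam fr15).1 2 == 0), ((lam fr2).1 2 == 0), ((lam fr12).1 1 == 0), ((lam fr21).1 1 == 0), ((lam fr12).1 2 == 0), ((lam fr21).1 2 == 0), ((lam fr19).1 1 == 0), ((lam fr8).1 1 == 0), ((lam fr8).1 2 == 0), ((lam fr19).1 2 == 0), ((lam fr24).1 2 == 0), ((lam fr27).1 2 == 0), ((lam fr17).1 1 == 0), ((lam fr17).1 2 == 0), ((lam fr28).1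 1 == 0), ((lam fr32).1 2 == 0), ((lam fr28).1 2 == 0), ((lam fr34).1 2 == 0), ((lam fr6).1 1 == 0), ((lam fr22).1 1 == 0), ((lam fr22).1 2 == 0), ((lam fr38).1 2 == 0), ((lam fr6).1 2 == 0), ((lam fr10).1 1 == 0), ((lam fr10).1 2 == 0), ((lam fr33).1 2 == 0), ((lam fr25).1 1 == 0), ((lam fr25).1 2 == 0), ((lam fr35).1 2 == 0), ((lam fr39).1 2 == 0), ((lam fr26).1 1 == 0), ((lam fr26).1 2 == 0), ((lam fr3).1 1 == 0), ((lam fr11).1 1 == 0), ((lam fr11).1 2 == 0), ((lam fr3).1 2 == 0), ((lam fr23).1 1 == 0), ((lam fr23).1 2 == 0), ((lam fr4).1 1 == 0), ((lam fr18).1 1 == 0), ((lam fr18).1 2 == 0), ((lam fr4).1 2 == 0)]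

theorem no_frame_function (lam : Frame → ↥Tset)
    (hcon : ∀ a a' : Frame, ∀ i j : Fin 3,
      SameLine (a.1 i) (a'.1 j) → (lam a).1 i = (lam a').1 j) : False := by
  apply noColoring (fun n => (valList lam).getD n false)
  intro p hp
  simp only [KTriples, List.mem_cons, List.not_mem_nil, or_false] at hp
  rcases hp with rfl|rfl|rfl|rfl|rfl|rfl|rfl|rfl|rfl|rfl|rfl|rfl|rfl|rfl|rfl|rfl|rfl|rfl|rfl|rfl|rfl|rfl|rfl|rfl|rfl|rfl|rfl|rfl|rfl|rfl|rfl|rfl|rfl|rfl|rfl|rfl|rfl|rfl|rfl|rfl|rfl|rfl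
  · have h := tpat (lam fr0).2
    have e0 : (valList lam).getD 0 false = ((lam fr0).1 0 == 0) :=
      congrArg (fun t => t == 0) (hcon fr0 fr0 0 0 (Or.inl ((show fr0.1 0 = nv vec0 from rfl).trans (show fr0.1 0 = nv vec0 from rfl).symm)))
    have e1 : (valList lam).getD 1 false = ((lam fr0).1 1 == 0) :=
      congrArg (fun t => t == 0) (hcon fr0 fr0 1 1 (Or.inl ((show fr0.1 1 = nv vec1 from rfl).trans (show fr0.1 1 = nv vec1 from rfl).symm)))
    have e2 : (valList lam).getD 2 false = ((lam fr0).1 2 == 0) :=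
      congrArg (fun t => t == 0) (hcon fr0 fr0 2 2 (Or.inl ((show fr0.1 2 = nv vec2 from rfl).trans (show fr0.1 2 = nv vec2 from rfl).symm)))
    simp only [tOKc, cv, e0, e1, e2]
    rcases h with ⟨h0,h1,h2⟩|⟨h0,h1,h2⟩|⟨h0,h1,h2⟩ <;> rw [h0,h1,h2] <;> rfl
  · have h := tpat (lam fr1).2
    have e0 : (valList lam).getD 0 false = ((lam fr1).1 0 == 0) :=
      congrArg (fun t => t == 0) (hcon fr0 fr1 0 0 (Or.inl ((show fr0.1 0 = nv vec0 from rfl).trans (show fr1.1 0 = nv vec0 from rfl).symm)))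
    have e1 : (valList lam).getD 7 false = ((lam fr1).1 1 == 0) :=
      congrArg (fun t => t == 0) (hcon fr1 fr1 1 1 (Or.inl ((show fr1.1 1 = nv vec7 from rfl).trans (show fr1.1 1 = nv vec7 from rfl).symm)))
    have e2 : (valList lam).getD 8 false = ((lam fr1).1 2 == 0) :=
      congrArg (fun t => t == 0) (hcon fr1 fr1 2 2 (Or.inl ((show fr1.1 2 = nv vec8 from rfl).trans (show fr1.1 2 = nv vec8 from rfl).symm)))
    simp only [tOKc, cv, e0, e1, e2]
    rcases h with ⟨h0,h1,h2⟩|⟨h0,h1,h2⟩|⟨h0,h1,h2⟩ <;> rw [h0,h1,h2] <;> rfl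
  · have h := tpat (lam fr2).2
    have e0 : (valList lam).getD 0 false = ((lam fr2).1 0 == 0) :=
      congrArg (fun t => t == 0) (hcon fr0 fr2 0 0 (Or.inl ((show fr0.1 0 = nv vec0 from rfl).trans (show fr2.1 0 = nv vec0 from rfl).symm)))
    have e1 : (valList lam).getD 16 false = ((lam fr2).1 1 == 0) :=
      congrArg (fun t => t == 0) (hcon fr2 fr2 1 1 (Or.inl ((show fr2.1 1 = nv vec16 from rfl).trans (show fr2.1 1 = nv vec16 from rfl).symm)))
    have e2 : (valList lam).getD 18 false = ((lam fr2).1 2 == 0) :=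
      congrArg (fun t => t == 0) (hcon fr2 fr2 2 2 (Or.inl ((show fr2.1 2 = nv vec18 from rfl).trans (show fr2.1 2 = nv vec18 from rfl).symm)))
    simp only [tOKc, cv, e0, e1, e2]
    rcases h with ⟨h0,h1,h2⟩|⟨h0,h1,h2⟩|⟨h0,h1,h2⟩ <;> rw [h0,h1,h2] <;> rfl
  · have h := tpat (lam fr3).2
    have e0 : (valList lam).getD 0 false = ((lam fr3).1 0 == 0) :=
      congrArg (fun t => t == 0) (hcon fr0 fr3 0 0 (Or.inl ((show fr0.1 0 = nv vec0 from rfl).trans (show fr3.1 0 = nv vec0 from rfl).symm)))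
    have e1 : (valList lam).getD 49 false = ((lam fr3).1 1 == 0) :=
      congrArg (fun t => t == 0) (hcon fr3 fr3 1 1 (Or.inl ((show fr3.1 1 = nv vec49 from rfl).trans (show fr3.1 1 = nv vec49 from rfl).symm)))
    have e2 : (valList lam).getD 52 false = ((lam fr3).1 2 == 0) :=
      congrArg (fun t => t == 0) (hcon fr3 fr3 2 2 (Or.inl ((show fr3.1 2 = nv vec52 from rfl).trans (show fr3.1 2 = nv vec52 from rfl).symm)))
    simp only [tOKc, cv, e0, e1, e2]
    rcases h with ⟨h0,h1,h2⟩|⟨h0,h1,h2⟩|⟨h0,h1,h2⟩ <;> rw [h0,h1,h2] <;> rfl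
  · have h := tpat (lam fr4).2
    have e0 : (valList lam).getD 0 false = ((lam fr4).1 0 == 0) :=
      congrArg (fun t => t == 0) (hcon fr0 fr4 0 0 (Or.inl ((show fr0.1 0 = nv vec0 from rfl).trans (show fr4.1 0 = nv vec0 from rfl).symm)))
    have e1 : (valList lam).getD 55 false = ((lam fr4).1 1 == 0) :=
      congrArg (fun t => t == 0) (hcon fr4 fr4 1 1 (Or.inl ((show fr4.1 1 = nv vec55 from rfl).trans (show fr4.1 1 = nv vec55 from rfl).symm)))
    have e2 : (valList lam).getD 58 false = ((lam fr4).1 2 == 0) :=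
      congrArg (fun t => t == 0) (hcon fr4 fr4 2 2 (Or.inl ((show fr4.1 2 = nv vec58 from rfl).trans (show fr4.1 2 = nv vec58 from rfl).symm)))
    simp only [tOKc, cv, e0, e1, e2]
    rcases h with ⟨h0,h1,h2⟩|⟨h0,h1,h2⟩|⟨h0,h1,h2⟩ <;> rw [h0,h1,h2] <;> rfl
  · have h := tpat (lam fr5).2
    have e0 : (valList lam).getD 1 false = ((lam fr5).1 0 == 0) :=
      congrArg (fun t => t == 0) (hcon fr0 fr5 1 0 (Or.inl ((show fr0.1 1 = nv vec1 from rfl).trans (show fr5.1 0 = nv vec1 from rfl).symm)))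
    have e1 : (valList lam).getD 13 false = ((lam fr5).1 1 == 0) :=
      congrArg (fun t => t == 0) (hcon fr5 fr5 1 1 (Or.inl ((show fr5.1 1 = nv vec13 from rfl).trans (show fr5.1 1 = nv vec13 from rfl).symm)))
    have e2 : (valList lam).getD 15 false = ((lam fr5).1 2 == 0) :=
      congrArg (fun t => t == 0) (hcon fr5 fr5 2 2 (Or.inl ((show fr5.1 2 = nv vec15 from rfl).trans (show fr5.1 2 = nv vec15 from rfl).symm)))
    simp only [tOKc, cv, e0, e1, e2]
    rcases h with ⟨h0,h1,h2⟩|⟨h0,h1,h2⟩|⟨h0,h1,h2⟩ <;> rw [h0,h1,h2] <;> rfl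
  · have h := tpat (lam fr6).2
    have e0 : (valList lam).getD 1 false = ((lam fr6).1 0 == 0) :=
      congrArg (fun t => t == 0) (hcon fr0 fr6 1 0 (Or.inl ((show fr0.1 1 = nv vec1 from rfl).trans (show fr6.1 0 = nv vec1 from rfl).symm)))
    have e1 : (valList lam).getD 35 false = ((lam fr6).1 1 == 0) :=
      congrArg (fun t => t == 0) (hcon fr6 fr6 1 1 (Or.inl ((show fr6.1 1 = nv vec35 from rfl).trans (show fr6.1 1 = nv vec35 from rfl).symm)))
    have e2 : (valList lam).getD 39 false = ((lam fr6).1 2 == 0) :=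
      congrArg (fun t => t == 0) (hcon fr6 fr6 2 2 (Or.inl ((show fr6.1 2 = nv vec39 from rfl).trans (show fr6.1 2 = nv vec39 from rfl).symm)))
    simp only [tOKc, cv, e0, e1, e2]
    rcases h with ⟨h0,h1,h2⟩|⟨h0,h1,h2⟩|⟨h0,h1,h2⟩ <;> rw [h0,h1,h2] <;> rfl
  · have h := tpat (lam fr7).2
    have e0 : (valList lam).getD 2 false = ((lam fr7).1 0 == 0) :=
      congrArg (fun t => t == 0) (hcon fr0 fr7 2 0 (Or.inl ((show fr0.1 2 = nv vec2 from rfl).trans (show fr7.1 0 = nv vec2 from rfl).symm)))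
    have e1 : (valList lam).getD 3 false = ((lam fr7).1 1 == 0) :=
      congrArg (fun t => t == 0) (hcon fr7 fr7 1 1 (Or.inl ((show fr7.1 1 = nv vec3 from rfl).trans (show fr7.1 1 = nv vec3 from rfl).symm)))
    have e2 : (valList lam).getD 4 false = ((lam fr7).1 2 == 0) :=
      congrArg (fun t => t == 0) (hcon fr7 fr7 2 2 (Or.inl ((show fr7.1 2 = nv vec4 from rfl).trans (show fr7.1 2 = nv vec4 from rfl).symm)))
    simp only [tOKc, cv, e0, e1, e2]
    rcases h with ⟨h0,h1,h2⟩|⟨h0,h1,h2⟩|⟨h0,h1,h2⟩ <;> rw [h0,h1,h2] <;> rfl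
  · have h := tpat (lam fr8).2
    have e0 : (valList lam).getD 2 false = ((lam fr8).1 0 == 0) :=
      congrArg (fun t => t == 0) (hcon fr0 fr8 2 0 (Or.inl ((show fr0.1 2 = nv vec2 from rfl).trans (show fr8.1 0 = nv vec2 from rfl).symm)))
    have e1 : (valList lam).getD 24 false = ((lam fr8).1 1 == 0) :=
      congrArg (fun t => t == 0) (hcon fr8 fr8 1 1 (Or.inl ((show fr8.1 1 = nv vec24 from rfl).trans (show fr8.1 1 = nv vec24 from rfl).symm)))
    have e2 : (valList lam).getD 25 false = ((lam fr8).1 2 == 0) :=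
      congrArg (fun t => t == 0) (hcon fr8 fr8 2 2 (Or.inl ((show fr8.1 2 = nv vec25 from rfl).trans (show fr8.1 2 = nv vec25 from rfl).symm)))
    simp only [tOKc, cv, e0, e1, e2]
    rcases h with ⟨h0,h1,h2⟩|⟨h0,h1,h2⟩|⟨h0,h1,h2⟩ <;> rw [h0,h1,h2] <;> rfl
  · have h := tpat (lam fr9).2
    have e0 : (valList lam).getD 3 false = ((lam fr9).1 0 == 0) :=
      congrArg (fun t => t == 0) (hcon fr7 fr9 1 0 (Or.inl ((show fr7.1 1 = nv vec3 from rfl).trans (show fr9.1 0 = nv vec3 from rfl).symm)))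
    have e1 : (valList lam).getD 5 false = ((lam fr9).1 1 == 0) :=
      congrArg (fun t => t == 0) (hcon fr9 fr9 1 1 (Or.inl ((show fr9.1 1 = nv vec5 from rfl).trans (show fr9.1 1 = nv vec5 from rfl).symm)))
    have e2 : (valList lam).getD 6 false = ((lam fr9).1 2 == 0) :=
      congrArg (fun t => t == 0) (hcon fr9 fr9 2 2 (Or.inl ((show fr9.1 2 = nv vec6 from rfl).trans (show fr9.1 2 = nv vec6 from rfl).symm)))
    simp only [tOKc, cv, e0, e1, e2]
    rcases h with ⟨h0,h1,h2⟩|⟨h0,h1,h2⟩|⟨h0,h1,h2⟩ <;> rw [h0,h1,h2] <;> rfl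
  · have h := tpat (lam fr10).2
    have e0 : (valList lam).getD 3 false = ((lam fr10).1 0 == 0) :=
      congrArg (fun t => t == 0) (hcon fr7 fr10 1 0 (Or.inl ((show fr7.1 1 = nv vec3 from rfl).trans (show fr10.1 0 = nv vec3 from rfl).symm)))
    have e1 : (valList lam).getD 40 false = ((lam fr10).1 1 == 0) :=
      congrArg (fun t => t == 0) (hcon fr10 fr10 1 1 (Or.inl ((show fr10.1 1 = nv vec40 from rfl).trans (show fr10.1 1 = nv vec40 from rfl).symm)))
    have e2 : (valList lam).getD 41 false = ((lam fr10).1 2 == 0) :=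
      congrArg (fun t => t == 0) (hcon fr10 fr10 2 2 (Or.inl ((show fr10.1 2 = nv vec41 from rfl).trans (show fr10.1 2 = nv vec41 from rfl).symm)))
    simp only [tOKc, cv, e0, e1, e2]
    rcases h with ⟨h0,h1,h2⟩|⟨h0,h1,h2⟩|⟨h0,h1,h2⟩ <;> rw [h0,h1,h2] <;> rfl
  · have h := tpat (lam fr11).2
    have e0 : (valList lam).getD 3 false = ((lam fr11).1 0 == 0) :=
      congrArg (fun t => t == 0) (hcon fr7 fr11 1 0 (Or.inl ((show fr7.1 1 = nv vec3 from rfl).trans (show fr11.1 0 = nv vec3 from rfl).symm)))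
    have e1 : (valList lam).getD 50 false = ((lam fr11).1 1 == 0) :=
      congrArg (fun t => t == 0) (hcon fr11 fr11 1 1 (Or.inl ((show fr11.1 1 = nv vec50 from rfl).trans (show fr11.1 1 = nv vec50 from rfl).symm)))
    have e2 : (valList lam).getD 51 false = ((lam fr11).1 2 == 0) :=
      congrArg (fun t => t == 0) (hcon fr11 fr11 2 2 (Or.inl ((show fr11.1 2 = nv vec51 from rfl).trans (show fr11.1 2 = nv vec51 from rfl).symm)))
    simp only [tOKc, cv, e0, e1, e2]
    rcases h with ⟨h0,h1,h2⟩|⟨h0,h1,h2⟩|⟨h0,h1,h2⟩ <;> rw [h0,h1,h2] <;> rfl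
  · have h := tpat (lam fr12).2
    have e0 : (valList lam).getD 4 false = ((lam fr12).1 0 == 0) :=
      congrArg (fun t => t == 0) (hcon fr7 fr12 2 0 (Or.inl ((show fr7.1 2 = nv vec4 from rfl).trans (show fr12.1 0 = nv vec4 from rfl).symm)))
    have e1 : (valList lam).getD 19 false = ((lam fr12).1 1 == 0) :=
      congrArg (fun t => t == 0) (hcon fr12 fr12 1 1 (Or.inl ((show fr12.1 1 = nv vec19 from rfl).trans (show fr12.1 1 = nv vec19 from rfl).symm)))
    have e2 : (valList lam).getD 21 false = ((lam fr12).1 2 == 0) :=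
      congrArg (fun t => t == 0) (hcon fr12 fr12 2 2 (Or.inl ((show fr12.1 2 = nv vec21 from rfl).trans (show fr12.1 2 = nv vec21 from rfl).symm)))
    simp only [tOKc, cv, e0, e1, e2]
    rcases h with ⟨h0,h1,h2⟩|⟨h0,h1,h2⟩|⟨h0,h1,h2⟩ <;> rw [h0,h1,h2] <;> rfl
  · have h := tpat (lam fr13).2
    have e0 : (valList lam).getD 5 false = ((lam fr13).1 0 == 0) :=
      congrArg (fun t => t == 0) (hcon fr9 fr13 1 0 (Or.inl ((show fr9.1 1 = nv vec5 from rfl).trans (show fr13.1 0 = nv vec5 from rfl).symm)))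
    have e1 : (valList lam).getD 10 false = ((lam fr13).1 1 == 0) :=
      congrArg (fun t => t == 0) (hcon fr13 fr13 1 1 (Or.inl ((show fr13.1 1 = nv vec10 from rfl).trans (show fr13.1 1 = nv vec10 from rfl).symm)))
    have e2 : (valList lam).getD 11 false = ((lam fr13).1 2 == 0) :=
      congrArg (fun t => t == 0) (hcon fr13 fr13 2 2 (Or.inl ((show fr13.1 2 = nv vec11 from rfl).trans (show fr13.1 2 = nv vec11 from rfl).symm)))
    simp only [tOKc, cv, e0, e1, e2]
    rcases h with ⟨h0,h1,h2⟩|⟨h0,h1,h2⟩|⟨h0,h1,h2⟩ <;> rw [h0,h1,h2] <;> rfl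
  · have h := tpat (lam fr14).2
    have e0 : (valList lam).getD 5 false = ((lam fr14).1 0 == 0) :=
      congrArg (fun t => t == 0) (hcon fr9 fr14 1 0 (Or.inl ((show fr9.1 1 = nv vec5 from rfl).trans (show fr14.1 0 = nv vec5 from rfl).symm)))
    have e1 : (valList lam).getD 13 false = ((lam fr14).1 1 == 0) :=
      congrArg (fun t => t == 0) (hcon fr5 fr14 1 1 (Or.inl ((show fr5.1 1 = nv vec13 from rfl).trans (show fr14.1 1 = nv vec13 from rfl).symm)))
    have e2 : (valList lam).getD 14 false = ((lam fr14).1 2 == 0) :=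
      congrArg (fun t => t == 0) (hcon fr14 fr14 2 2 (Or.inl ((show fr14.1 2 = nv vec14 from rfl).trans (show fr14.1 2 = nv vec14 from rfl).symm)))
    simp only [tOKc, cv, e0, e1, e2]
    rcases h with ⟨h0,h1,h2⟩|⟨h0,h1,h2⟩|⟨h0,h1,h2⟩ <;> rw [h0,h1,h2] <;> rfl
  · have h := tpat (lam fr15).2
    have e0 : (valList lam).getD 5 false = ((lam fr15).1 0 == 0) :=
      congrArg (fun t => t == 0) (hcon fr9 fr15 1 0 (Or.inl ((show fr9.1 1 = nv vec5 from rfl).trans (show fr15.1 0 = nv vec5 from rfl).symm)))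
    have e1 : (valList lam).getD 16 false = ((lam fr15).1 1 == 0) :=
      congrArg (fun t => t == 0) (hcon fr2 fr15 1 1 (Or.inl ((show fr2.1 1 = nv vec16 from rfl).trans (show fr15.1 1 = nv vec16 from rfl).symm)))
    have e2 : (valList lam).getD 17 false = ((lam fr15).1 2 == 0) :=
      congrArg (fun t => t == 0) (hcon fr15 fr15 2 2 (Or.inl ((show fr15.1 2 = nv vec17 from rfl).trans (show fr15.1 2 = nv vec17 from rfl).symm)))
    simp only [tOKc, cv, e0, e1, e2]
    rcases h with ⟨h0,h1,h2⟩|⟨h0,h1,h2⟩|⟨h0,h1,h2⟩ <;> rw [h0,h1,h2] <;> rfl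
  · have h := tpat (lam fr16).2
    have e0 : (valList lam).getD 6 false = ((lam fr16).1 0 == 0) :=
      congrArg (fun t => t == 0) (hcon fr9 fr16 2 0 (Or.inl ((show fr9.1 2 = nv vec6 from rfl).trans (show fr16.1 0 = nv vec6 from rfl).symm)))
    have e1 : (valList lam).getD 7 false = ((lam fr16).1 1 == 0) :=
      congrArg (fun t => t == 0) (hcon fr1 fr16 1 1 (Or.inl ((show fr1.1 1 = nv vec7 from rfl).trans (show fr16.1 1 = nv vec7 from rfl).symm)))
    have e2 : (valList lam).getD 9 false = ((lam fr16).1 2 == 0) :=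
      congrArg (fun t => t == 0) (hcon fr16 fr16 2 2 (Or.inl ((show fr16.1 2 = nv vec9 from rfl).trans (show fr16.1 2 = nv vec9 from rfl).symm)))
    simp only [tOKc, cv, e0, e1, e2]
    rcases h with ⟨h0,h1,h2⟩|⟨h0,h1,h2⟩|⟨h0,h1,h2⟩ <;> rw [h0,h1,h2] <;> rfl
  · have h := tpat (lam fr17).2
    have e0 : (valList lam).getD 6 false = ((lam fr17).1 0 == 0) :=
      congrArg (fun t => t == 0) (hcon fr9 fr17 2 0 (Or.inl ((show fr9.1 2 = nv vec6 from rfl).trans (show fr17.1 0 = nv vec6 from rfl).symm)))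
    have e1 : (valList lam).getD 29 false = ((lam fr17).1 1 == 0) :=
      congrArg (fun t => t == 0) (hcon fr17 fr17 1 1 (Or.inl ((show fr17.1 1 = nv vec29 from rfl).trans (show fr17.1 1 = nv vec29 from rfl).symm)))
    have e2 : (valList lam).getD 30 false = ((lam fr17).1 2 == 0) :=
      congrArg (fun t => t == 0) (hcon fr17 fr17 2 2 (Or.inl ((show fr17.1 2 = nv vec30 from rfl).trans (show fr17.1 2 = nv vec30 from rfl).symm)))
    simp only [tOKc, cv, e0, e1, e2]
    rcases h with ⟨h0,h1,h2⟩|⟨h0,h1,h2⟩|⟨h0,h1,h2⟩ <;> rw [h0,h1,h2] <;> rfl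
  · have h := tpat (lam fr18).2
    have e0 : (valList lam).getD 6 false = ((lam fr18).1 0 == 0) :=
      congrArg (fun t => t == 0) (hcon fr9 fr18 2 0 (Or.inl ((show fr9.1 2 = nv vec6 from rfl).trans (show fr18.1 0 = nv vec6 from rfl).symm)))
    have e1 : (valList lam).getD 56 false = ((lam fr18).1 1 == 0) :=
      congrArg (fun t => t == 0) (hcon fr18 fr18 1 1 (Or.inl ((show fr18.1 1 = nv vec56 from rfl).trans (show fr18.1 1 = nv vec56 from rfl).symm)))
    have e2 : (valList lam).getD 57 false = ((lam fr18).1 2 == 0) :=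
      congrArg (fun t => t == 0) (hcon fr18 fr18 2 2 (Or.inl ((show fr18.1 2 = nv vec57 from rfl).trans (show fr18.1 2 = nv vec57 from rfl).symm)))
    simp only [tOKc, cv, e0, e1, e2]
    rcases h with ⟨h0,h1,h2⟩|⟨h0,h1,h2⟩|⟨h0,h1,h2⟩ <;> rw [h0,h1,h2] <;> rfl
  · have h := tpat (lam fr19).2
    have e0 : (valList lam).getD 7 false = ((lam fr19).1 0 == 0) :=
      congrArg (fun t => t == 0) (hcon fr1 fr19 1 0 (Or.inl ((show fr1.1 1 = nv vec7 from rfl).trans (show fr19.1 0 = nv vec7 from rfl).symm)))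
    have e1 : (valList lam).getD 23 false = ((lam fr19).1 1 == 0) :=
      congrArg (fun t => t == 0) (hcon fr19 fr19 1 1 (Or.inl ((show fr19.1 1 = nv vec23 from rfl).trans (show fr19.1 1 = nv vec23 from rfl).symm)))
    have e2 : (valList lam).getD 26 false = ((lam fr19).1 2 == 0) :=
      congrArg (fun t => t == 0) (hcon fr19 fr19 2 2 (Or.inl ((show fr19.1 2 = nv vec26 from rfl).trans (show fr19.1 2 = nv vec26 from rfl).symm)))
    simp only [tOKc, cv, e0, e1, e2]
    rcases h with ⟨h0,h1,h2⟩|⟨h0,h1,h2⟩|⟨h0,h1,h2⟩ <;> rw [h0,h1,h2] <;> rfl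
  · have h := tpat (lam fr20).2
    have e0 : (valList lam).getD 8 false = ((lam fr20).1 0 == 0) :=
      congrArg (fun t => t == 0) (hcon fr1 fr20 2 0 (Or.inl ((show fr1.1 2 = nv vec8 from rfl).trans (show fr20.1 0 = nv vec8 from rfl).symm)))
    have e1 : (valList lam).getD 10 false = ((lam fr20).1 1 == 0) :=
      congrArg (fun t => t == 0) (hcon fr13 fr20 1 1 (Or.inl ((show fr13.1 1 = nv vec10 from rfl).trans (show fr20.1 1 = nv vec10 from rfl).symm)))
    have e2 : (valList lam).getD 12 false = ((lam fr20).1 2 == 0) :=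
      congrArg (fun t => t == 0) (hcon fr20 fr20 2 2 (Or.inl ((show fr20.1 2 = nv vec12 from rfl).trans (show fr20.1 2 = nv vec12 from rfl).symm)))
    simp only [tOKc, cv, e0, e1, e2]
    rcases h with ⟨h0,h1,h2⟩|⟨h0,h1,h2⟩|⟨h0,h1,h2⟩ <;> rw [h0,h1,h2] <;> rfl
  · have h := tpat (lam fr21).2
    have e0 : (valList lam).getD 8 false = ((lam fr21).1 0 == 0) :=
      congrArg (fun t => t == 0) (hcon fr1 fr21 2 0 (Or.inl ((show fr1.1 2 = nv vec8 from rfl).trans (show fr21.1 0 = nv vec8 from rfl).symm)))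
    have e1 : (valList lam).getD 20 false = ((lam fr21).1 1 == 0) :=
      congrArg (fun t => t == 0) (hcon fr21 fr21 1 1 (Or.inl ((show fr21.1 1 = nv vec20 from rfl).trans (show fr21.1 1 = nv vec20 from rfl).symm)))
    have e2 : (valList lam).getD 22 false = ((lam fr21).1 2 == 0) :=
      congrArg (fun t => t == 0) (hcon fr21 fr21 2 2 (Or.inl ((show fr21.1 2 = nv vec22 from rfl).trans (show fr21.1 2 = nv vec22 from rfl).symm)))
    simp only [tOKc, cv, e0, e1, e2]
    rcases h with ⟨h0,h1,h2⟩|⟨h0,h1,h2⟩|⟨h0,h1,h2⟩ <;> rw [h0,h1,h2] <;> rfl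
  · have h := tpat (lam fr22).2
    have e0 : (valList lam).getD 9 false = ((lam fr22).1 0 == 0) :=
      congrArg (fun t => t == 0) (hcon fr16 fr22 2 0 (Or.inl ((show fr16.1 2 = nv vec9 from rfl).trans (show fr22.1 0 = nv vec9 from rfl).symm)))
    have e1 : (valList lam).getD 36 false = ((lam fr22).1 1 == 0) :=
      congrArg (fun t => t == 0) (hcon fr22 fr22 1 1 (Or.inl ((show fr22.1 1 = nv vec36 from rfl).trans (show fr22.1 1 = nv vec36 from rfl).symm)))
    have e2 : (valList lam).getD 37 false = ((lam fr22).1 2 == 0) :=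
      congrArg (fun t => t == 0) (hcon fr22 fr22 2 2 (Or.inl ((show fr22.1 2 = nv vec37 from rfl).trans (show fr22.1 2 = nv vec37 from rfl).symm)))
    simp only [tOKc, cv, e0, e1, e2]
    rcases h with ⟨h0,h1,h2⟩|⟨h0,h1,h2⟩|⟨h0,h1,h2⟩ <;> rw [h0,h1,h2] <;> rfl
  · have h := tpat (lam fr23).2
    have e0 : (valList lam).getD 10 false = ((lam fr23).1 0 == 0) :=
      congrArg (fun t => t == 0) (hcon fr13 fr23 1 0 (Or.inl ((show fr13.1 1 = nv vec10 from rfl).trans (show fr23.1 0 = nv vec10 from rfl).symm)))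
    have e1 : (valList lam).getD 53 false = ((lam fr23).1 1 == 0) :=
      congrArg (fun t => t == 0) (hcon fr23 fr23 1 1 (Or.inl ((show fr23.1 1 = nv vec53 from rfl).trans (show fr23.1 1 = nv vec53 from rfl).symm)))
    have e2 : (valList lam).getD 54 false = ((lam fr23).1 2 == 0) :=
      congrArg (fun t => t == 0) (hcon fr23 fr23 2 2 (Or.inl ((show fr23.1 2 = nv vec54 from rfl).trans (show fr23.1 2 = nv vec54 from rfl).symm)))
    simp only [tOKc, cv, e0, e1, e2]
    rcases h with ⟨h0,h1,h2⟩|⟨h0,h1,h2⟩|⟨h0,h1,h2⟩ <;> rw [h0,h1,h2] <;> rfl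
  · have h := tpat (lam fr24).2
    have e0 : (valList lam).getD 11 false = ((lam fr24).1 0 == 0) :=
      congrArg (fun t => t == 0) (hcon fr13 fr24 2 0 (Or.inl ((show fr13.1 2 = nv vec11 from rfl).trans (show fr24.1 0 = nv vec11 from rfl).symm)))
    have e1 : (valList lam).getD 25 false = ((lam fr24).1 1 == 0) :=
      congrArg (fun t => t == 0) (hcon fr8 fr24 2 1 (Or.inl ((show fr8.1 2 = nv vec25 from rfl).trans (show fr24.1 1 = nv vec25 from rfl).symm)))
    have e2 : (valList lam).getD 27 false = ((lam fr24).1 2 == 0) :=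
      congrArg (fun t => t == 0) (hcon fr24 fr24 2 2 (Or.inl ((show fr24.1 2 = nv vec27 from rfl).trans (show fr24.1 2 = nv vec27 from rfl).symm)))
    simp only [tOKc, cv, e0, e1, e2]
    rcases h with ⟨h0,h1,h2⟩|⟨h0,h1,h2⟩|⟨h0,h1,h2⟩ <;> rw [h0,h1,h2] <;> rfl
  · have h := tpat (lam fr25).2
    have e0 : (valList lam).getD 11 false = ((lam fr25).1 0 == 0) :=
      congrArg (fun t => t == 0) (hcon fr13 fr25 2 0 (Or.inl ((show fr13.1 2 = nv vec11 from rfl).trans (show fr25.1 0 = nv vec11 from rfl).symm)))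
    have e1 : (valList lam).getD 43 false = ((lam fr25).1 1 == 0) :=
      congrArg (fun t => t == 0) (hcon fr25 fr25 1 1 (Or.inl ((show fr25.1 1 = nv vec43 from rfl).trans (show fr25.1 1 = nv vec43 from rfl).symm)))
    have e2 : (valList lam).getD 44 false = ((lam fr25).1 2 == 0) :=
      congrArg (fun t => t == 0) (hcon fr25 fr25 2 2 (Or.inl ((show fr25.1 2 = nv vec44 from rfl).trans (show fr25.1 2 = nv vec44 from rfl).symm)))
    simp only [tOKc, cv, e0, e1, e2]
    rcases h with ⟨h0,h1,h2⟩|⟨h0,h1,h2⟩|⟨h0,h1,h2⟩ <;> rw [h0,h1,h2] <;> rfl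
  · have h := tpat (lam fr26).2
    have e0 : (valList lam).getD 13 false = ((lam fr26).1 0 == 0) :=
      congrArg (fun t => t == 0) (hcon fr5 fr26 1 0 (Or.inl ((show fr5.1 1 = nv vec13 from rfl).trans (show fr26.1 0 = nv vec13 from rfl).symm)))
    have e1 : (valList lam).getD 47 false = ((lam fr26).1 1 == 0) :=
      congrArg (fun t => t == 0) (hcon fr26 fr26 1 1 (Or.inl ((show fr26.1 1 = nv vec47 from rfl).trans (show fr26.1 1 = nv vec47 from rfl).symm)))
    have e2 : (valList lam).getD 48 false = ((lam fr26).1 2 == 0) :=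
      congrArg (fun t => t == 0) (hcon fr26 fr26 2 2 (Or.inl ((show fr26.1 2 = nv vec48 from rfl).trans (show fr26.1 2 = nv vec48 from rfl).symm)))
    simp only [tOKc, cv, e0, e1, e2]
    rcases h with ⟨h0,h1,h2⟩|⟨h0,h1,h2⟩|⟨h0,h1,h2⟩ <;> rw [h0,h1,h2] <;> rfl
  · have h := tpat (lam fr27).2
    have e0 : (valList lam).getD 14 false = ((lam fr27).1 0 == 0) :=
      congrArg (fun t => t == 0) (hcon fr14 fr27 2 0 (Or.inl ((show fr14.1 2 = nv vec14 from rfl).trans (show fr27.1 0 = nv vec14 from rfl).symm)))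
    have e1 : (valList lam).getD 26 false = ((lam fr27).1 1 == 0) :=
      congrArg (fun t => t == 0) (hcon fr19 fr27 2 1 (Or.inl ((show fr19.1 2 = nv vec26 from rfl).trans (show fr27.1 1 = nv vec26 from rfl).symm)))
    have e2 : (valList lam).getD 28 false = ((lam fr27).1 2 == 0) :=
      congrArg (fun t => t == 0) (hcon fr27 fr27 2 2 (Or.inl ((show fr27.1 2 = nv vec28 from rfl).trans (show fr27.1 2 = nv vec28 from rfl).symm)))
    simp only [tOKc, cv, e0, e1, e2]
    rcases h with ⟨h0,h1,h2⟩|⟨h0,h1,h2⟩|⟨h0,h1,h2⟩ <;> rw [h0,h1,h2] <;> rfl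
  · have h := tpat (lam fr28).2
    have e0 : (valList lam).getD 14 false = ((lam fr28).1 0 == 0) :=
      congrArg (fun t => t == 0) (hcon fr14 fr28 2 0 (Or.inl ((show fr14.1 2 = nv vec14 from rfl).trans (show fr28.1 0 = nv vec14 from rfl).symm)))
    have e1 : (valList lam).getD 31 false = ((lam fr28).1 1 == 0) :=
      congrArg (fun t => t == 0) (hcon fr28 fr28 1 1 (Or.inl ((show fr28.1 1 = nv vec31 from rfl).trans (show fr28.1 1 = nv vec31 from rfl).symm)))
    have e2 : (valList lam).getD 33 false = ((lam fr28).1 2 == 0) :=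
      congrArg (fun t => t == 0) (hcon fr28 fr28 2 2 (Or.inl ((show fr28.1 2 = nv vec33 from rfl).trans (show fr28.1 2 = nv vec33 from rfl).symm)))
    simp only [tOKc, cv, e0, e1, e2]
    rcases h with ⟨h0,h1,h2⟩|⟨h0,h1,h2⟩|⟨h0,h1,h2⟩ <;> rw [h0,h1,h2] <;> rfl
  · have h := tpat (lam fr29).2
    have e0 : (valList lam).getD 17 false = ((lam fr29).1 0 == 0) :=
      congrArg (fun t => t == 0) (hcon fr15 fr29 2 0 (Or.inl ((show fr15.1 2 = nv vec17 from rfl).trans (show fr29.1 0 = nv vec17 from rfl).symm)))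
    have e1 : (valList lam).getD 19 false = ((lam fr29).1 1 == 0) :=
      congrArg (fun t => t == 0) (hcon fr12 fr29 1 1 (Or.inl ((show fr12.1 1 = nv vec19 from rfl).trans (show fr29.1 1 = nv vec19 from rfl).symm)))
    have e2 : (valList lam).getD 20 false = ((lam fr29).1 2 == 0) :=
      congrArg (fun t => t == 0) (hcon fr21 fr29 1 2 (Or.inl ((show fr21.1 1 = nv vec20 from rfl).trans (show fr29.1 2 = nv vec20 from rfl).symm)))
    simp only [tOKc, cv, e0, e1, e2]
    rcases h with ⟨h0,h1,h2⟩|⟨h0,h1,h2⟩|⟨h0,h1,h2⟩ <;> rw [h0,h1,h2] <;> rfl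
  · have h := tpat (lam fr30).2
    have e0 : (valList lam).getD 17 false = ((lam fr30).1 0 == 0) :=
      congrArg (fun t => t == 0) (hcon fr15 fr30 2 0 (Or.inl ((show fr15.1 2 = nv vec17 from rfl).trans (show fr30.1 0 = nv vec17 from rfl).symm)))
    have e1 : (valList lam).getD 23 false = ((lam fr30).1 1 == 0) :=
      congrArg (fun t => t == 0) (hcon fr19 fr30 1 1 (Or.inl ((show fr19.1 1 = nv vec23 from rfl).trans (show fr30.1 1 = nv vec23 from rfl).symm)))
    have e2 : (valList lam).getD 24 false = ((lam fr30).1 2 == 0) :=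
      congrArg (fun t => t == 0) (hcon fr8 fr30 1 2 (Or.inl ((show fr8.1 1 = nv vec24 from rfl).trans (show fr30.1 2 = nv vec24 from rfl).symm)))
    simp only [tOKc, cv, e0, e1, e2]
    rcases h with ⟨h0,h1,h2⟩|⟨h0,h1,h2⟩|⟨h0,h1,h2⟩ <;> rw [h0,h1,h2] <;> rfl
  · have h := tpat (lam fr31).2
    have e0 : (valList lam).getD 17 false = ((lam fr31).1 0 == 0) :=
      congrArg (fun t => t == 0) (hcon fr15 fr31 2 0 (Or.inl ((show fr15.1 2 = nv vec17 from rfl).trans (show fr31.1 0 = nv vec17 from rfl).symm)))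
    have e1 : (valList lam).getD 35 false = ((lam fr31).1 1 == 0) :=
      congrArg (fun t => t == 0) (hcon fr6 fr31 1 1 (Or.inl ((show fr6.1 1 = nv vec35 from rfl).trans (show fr31.1 1 = nv vec35 from rfl).symm)))
    have e2 : (valList lam).getD 36 false = ((lam fr31).1 2 == 0) :=
      congrArg (fun t => t == 0) (hcon fr22 fr31 1 2 (Or.inl ((show fr22.1 1 = nv vec36 from rfl).trans (show fr31.1 2 = nv vec36 from rfl).symm)))
    simp only [tOKc, cv, e0, e1, e2]
    rcases h with ⟨h0,h1,h2⟩|⟨h0,h1,h2⟩|⟨h0,h1,h2⟩ <;> rw [h0,h1,h2] <;> rfl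
  · have h := tpat (lam fr32).2
    have e0 : (valList lam).getD 18 false = ((lam fr32).1 0 == 0) :=
      congrArg (fun t => t == 0) (hcon fr2 fr32 2 0 (Or.inl ((show fr2.1 2 = nv vec18 from rfl).trans (show fr32.1 0 = nv vec18 from rfl).symm)))
    have e1 : (valList lam).getD 29 false = ((lam fr32).1 1 == 0) :=
      congrArg (fun t => t == 0) (hcon fr17 fr32 1 1 (Or.inl ((show fr17.1 1 = nv vec29 from rfl).trans (show fr32.1 1 = nv vec29 from rfl).symm)))
    have e2 : (valList lam).getD 32 false = ((lam fr32).1 2 == 0) :=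
      congrArg (fun t => t == 0) (hcon fr32 fr32 2 2 (Or.inl ((show fr32.1 2 = nv vec32 from rfl).trans (show fr32.1 2 = nv vec32 from rfl).symm)))
    simp only [tOKc, cv, e0, e1, e2]
    rcases h with ⟨h0,h1,h2⟩|⟨h0,h1,h2⟩|⟨h0,h1,h2⟩ <;> rw [h0,h1,h2] <;> rfl
  · have h := tpat (lam fr33).2
    have e0 : (valList lam).getD 18 false = ((lam fr33).1 0 == 0) :=
      congrArg (fun t => t == 0) (hcon fr2 fr33 2 0 (Or.inl ((show fr2.1 2 = nv vec18 from rfl).trans (show fr33.1 0 = nv vec18 from rfl).symm)))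
    have e1 : (valList lam).getD 40 false = ((lam fr33).1 1 == 0) :=
      congrArg (fun t => t == 0) (hcon fr10 fr33 1 1 (Or.inl ((show fr10.1 1 = nv vec40 from rfl).trans (show fr33.1 1 = nv vec40 from rfl).symm)))
    have e2 : (valList lam).getD 42 false = ((lam fr33).1 2 == 0) :=
      congrArg (fun t => t == 0) (hcon fr33 fr33 2 2 (Or.inl ((show fr33.1 2 = nv vec42 from rfl).trans (show fr33.1 2 = nv vec42 from rfl).symm)))
    simp only [tOKc, cv, e0, e1, e2]
    rcases h with ⟨h0,h1,h2⟩|⟨h0,h1,h2⟩|⟨h0,h1,h2⟩ <;> rw [h0,h1,h2] <;> rfl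
  · have h := tpat (lam fr34).2
    have e0 : (valList lam).getD 19 false = ((lam fr34).1 0 == 0) :=
      congrArg (fun t => t == 0) (hcon fr12 fr34 1 0 (Or.inl ((show fr12.1 1 = nv vec19 from rfl).trans (show fr34.1 0 = nv vec19 from rfl).symm)))
    have e1 : (valList lam).getD 30 false = ((lam fr34).1 1 == 0) :=
      congrArg (fun t => t == 0) (hcon fr17 fr34 2 1 (Or.inl ((show fr17.1 2 = nv vec30 from rfl).trans (show fr34.1 1 = nv vec30 from rfl).symm)))
    have e2 : (valList lam).getD 34 false = ((lam fr34).1 2 == 0) :=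
      congrArg (fun t => t == 0) (hcon fr34 fr34 2 2 (Or.inl ((show fr34.1 2 = nv vec34 from rfl).trans (show fr34.1 2 = nv vec34 from rfl).symm)))
    simp only [tOKc, cv, e0, e1, e2]
    rcases h with ⟨h0,h1,h2⟩|⟨h0,h1,h2⟩|⟨h0,h1,h2⟩ <;> rw [h0,h1,h2] <;> rfl
  · have h := tpat (lam fr35).2
    have e0 : (valList lam).getD 20 false = ((lam fr35).1 0 == 0) :=
      congrArg (fun t => t == 0) (hcon fr21 fr35 1 0 (Or.inl ((show fr21.1 1 = nv vec20 from rfl).trans (show fr35.1 0 = nv vec20 from rfl).symm)))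
    have e1 : (valList lam).getD 42 false = ((lam fr35).1 1 == 0) :=
      congrArg (fun t => t == 0) (hcon fr33 fr35 2 1 (Or.inl ((show fr33.1 2 = nv vec42 from rfl).trans (show fr35.1 1 = nv vec42 from rfl).symm)))
    have e2 : (valList lam).getD 45 false = ((lam fr35).1 2 == 0) :=
      congrArg (fun t => t == 0) (hcon fr35 fr35 2 2 (Or.inl ((show fr35.1 2 = nv vec45 from rfl).trans (show fr35.1 2 = nv vec45 from rfl).symm)))
    simp only [tOKc, cv, e0, e1, e2]
    rcases h with ⟨h0,h1,h2⟩|⟨h0,h1,h2⟩|⟨h0,h1,h2⟩ <;> rw [h0,h1,h2] <;> rfl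
  · have h := tpat (lam fr36).2
    have e0 : (valList lam).getD 23 false = ((lam fr36).1 0 == 0) :=
      congrArg (fun t => t == 0) (hcon fr19 fr36 1 0 (Or.inl ((show fr19.1 1 = nv vec23 from rfl).trans (show fr36.1 0 = nv vec23 from rfl).symm)))
    have e1 : (valList lam).getD 40 false = ((lam fr36).1 1 == 0) :=
      congrArg (fun t => t == 0) (hcon fr10 fr36 1 1 (Or.inl ((show fr10.1 1 = nv vec40 from rfl).trans (show fr36.1 1 = nv vec40 from rfl).symm)))
    have e2 : (valList lam).getD 43 false = ((lam fr36).1 2 == 0) :=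
      congrArg (fun t => t == 0) (hcon fr25 fr36 1 2 (Or.inl ((show fr25.1 1 = nv vec43 from rfl).trans (show fr36.1 2 = nv vec43 from rfl).symm)))
    simp only [tOKc, cv, e0, e1, e2]
    rcases h with ⟨h0,h1,h2⟩|⟨h0,h1,h2⟩|⟨h0,h1,h2⟩ <;> rw [h0,h1,h2] <;> rfl
  · have h := tpat (lam fr37).2
    have e0 : (valList lam).getD 24 false = ((lam fr37).1 0 == 0) :=
      congrArg (fun t => t == 0) (hcon fr8 fr37 1 0 (Or.inl ((show fr8.1 1 = nv vec24 from rfl).trans (show fr37.1 0 = nv vec24 from rfl).symm)))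
    have e1 : (valList lam).getD 29 false = ((lam fr37).1 1 == 0) :=
      congrArg (fun t => t == 0) (hcon fr17 fr37 1 1 (Or.inl ((show fr17.1 1 = nv vec29 from rfl).trans (show fr37.1 1 = nv vec29 from rfl).symm)))
    have e2 : (valList lam).getD 31 false = ((lam fr37).1 2 == 0) :=
      congrArg (fun t => t == 0) (hcon fr28 fr37 1 2 (Or.inl ((show fr28.1 1 = nv vec31 from rfl).trans (show fr37.1 2 = nv vec31 from rfl).symm)))
    simp only [tOKc, cv, e0, e1, e2]
    rcases h with ⟨h0,h1,h2⟩|⟨h0,h1,h2⟩|⟨h0,h1,h2⟩ <;> rw [h0,h1,h2] <;> rfl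
  · have h := tpat (lam fr38).2
    have e0 : (valList lam).getD 32 false = ((lam fr38).1 0 == 0) :=
      congrArg (fun t => t == 0) (hcon fr32 fr38 2 0 (Or.inl ((show fr32.1 2 = nv vec32 from rfl).trans (show fr38.1 0 = nv vec32 from rfl).symm)))
    have e1 : (valList lam).getD 35 false = ((lam fr38).1 1 == 0) :=
      congrArg (fun t => t == 0) (hcon fr6 fr38 1 1 (Or.inl ((show fr6.1 1 = nv vec35 from rfl).trans (show fr38.1 1 = nv vec35 from rfl).symm)))
    have e2 : (valList lam).getD 38 false = ((lam fr38).1 2 == 0) :=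
      congrArg (fun t => t == 0) (hcon fr38 fr38 2 2 (Or.inl ((show fr38.1 2 = nv vec38 from rfl).trans (show fr38.1 2 = nv vec38 from rfl).symm)))
    simp only [tOKc, cv, e0, e1, e2]
    rcases h with ⟨h0,h1,h2⟩|⟨h0,h1,h2⟩|⟨h0,h1,h2⟩ <;> rw [h0,h1,h2] <;> rfl
  · have h := tpat (lam fr39).2
    have e0 : (valList lam).getD 36 false = ((lam fr39).1 0 == 0) :=
      congrArg (fun t => t == 0) (hcon fr22 fr39 1 0 (Or.inl ((show fr22.1 1 = nv vec36 from rfl).trans (show fr39.1 0 = nv vec36 from rfl).symm)))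
    have e1 : (valList lam).getD 41 false = ((lam fr39).1 1 == 0) :=
      congrArg (fun t => t == 0) (hcon fr10 fr39 2 1 (Or.inl ((show fr10.1 2 = nv vec41 from rfl).trans (show fr39.1 1 = nv vec41 from rfl).symm)))
    have e2 : (valList lam).getD 46 false = ((lam fr39).1 2 == 0) :=
      congrArg (fun t => t == 0) (hcon fr39 fr39 2 2 (Or.inl ((show fr39.1 2 = nv vec46 from rfl).trans (show fr39.1 2 = nv vec46 from rfl).symm)))
    simp only [tOKc, cv, e0, e1, e2]
    rcases h with ⟨h0,h1,h2⟩|⟨h0,h1,h2⟩|⟨h0,h1,h2⟩ <;> rw [h0,h1,h2] <;> rfl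
  · have h := tpat (lam fr40).2
    have e0 : (valList lam).getD 47 false = ((lam fr40).1 0 == 0) :=
      congrArg (fun t => t == 0) (hcon fr26 fr40 1 0 (Or.inl ((show fr26.1 1 = nv vec47 from rfl).trans (show fr40.1 0 = nv vec47 from rfl).symm)))
    have e1 : (valList lam).getD 49 false = ((lam fr40).1 1 == 0) :=
      congrArg (fun t => t == 0) (hcon fr3 fr40 1 1 (Or.inl ((show fr3.1 1 = nv vec49 from rfl).trans (show fr40.1 1 = nv vec49 from rfl).symm)))
    have e2 : (valList lam).getD 50 false = ((lam fr40).1 2 == 0) :=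
      congrArg (fun t => t == 0) (hcon fr11 fr40 1 2 (Or.inl ((show fr11.1 1 = nv vec50 from rfl).trans (show fr40.1 2 = nv vec50 from rfl).symm)))
    simp only [tOKc, cv, e0, e1, e2]
    rcases h with ⟨h0,h1,h2⟩|⟨h0,h1,h2⟩|⟨h0,h1,h2⟩ <;> rw [h0,h1,h2] <;> rfl
  · have h := tpat (lam fr41).2
    have e0 : (valList lam).getD 53 false = ((lam fr41).1 0 == 0) :=
      congrArg (fun t => t == 0) (hcon fr23 fr41 1 0 (Or.inl ((show fr23.1 1 = nv vec53 from rfl).trans (show fr41.1 0 = nv vec53 from rfl).symm)))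
    have e1 : (valList lam).getD 55 false = ((lam fr41).1 1 == 0) :=
      congrArg (fun t => t == 0) (hcon fr4 fr41 1 1 (Or.inl ((show fr4.1 1 = nv vec55 from rfl).trans (show fr41.1 1 = nv vec55 from rfl).symm)))
    have e2 : (valList lam).getD 56 false = ((lam fr41).1 2 == 0) :=
      congrArg (fun t => t == 0) (hcon fr18 fr41 1 2 (Or.inl ((show fr18.1 1 = nv vec56 from rfl).trans (show fr41.1 2 = nv vec56 from rfl).symm)))
    simp only [tOKc, cv, e0, e1, e2]
    rcases h with ⟨h0,h1,h2⟩|⟨h0,h1,h2⟩|⟨h0,h1,h2⟩ <;> rw [h0,h1,h2] <;> rfl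

/-! ### Main theorem -/

/-- The Kochen–Specker Theorem: Determinism, Value Definiteness, Noncontextuality and the
Identification Principle are mutually exclusive. There are no `X`, surjective `A : X → 𝓕`,
`F : X → T`, `X_Z`, `Z : X → X_Z` and `F̂ : 𝓕 × X_Z → T` with `F x = F̂ (A x) (Z x)` for all
`x` and such that for each `z` the map `a ↦ F̂ a z` is a frame function on `𝓕`. -/
theorem kochen_specker :
    ¬ ∃ (X : Type) (A : X → Frame) (F : X → ↥Tset) (XZ : Type) (Z : X → XZ)
        (Fh : Frame → XZ → ↥Tset),
      Function.Surjective A ∧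
      (∀ x : X, F x = Fh (A x) (Z x)) ∧
      (∀ z : XZ, ∀ a a' : Frame, ∀ i j : Fin 3,
          SameLine (a.1 i) (a'.1 j) → (Fh a z).1 i = (Fh a' z).1 j) := by
  rintro ⟨X, A, F, XZ, Z, Fh, hsurj, hFh, hframe⟩
  obtain ⟨x, -⟩ := hsurj stdF
  exact no_frame_function (fun a => Fh a (Z x)) (fun a a' i j h => hframe (Z x) a a' i j h)
end
end

section
/- The set of rational frames is dense in the set of all frames: for every frame (a₁,a₂,a₃) in ℝ³ and every ε > 0, there exists a frame (b₁,b₂,b₃) all of whose vectors have rational coordinates (b₁,b₂,b₃ ∈ ℚ³) such that for every index i there is an index j with min(‖aᵢ - bⱼ‖, ‖aᵢ + bⱼ‖) < ε. -/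
noncomputable section

/-- A vector with all coordinates rational. -/
def IsRatVec (a : V3) : Prop := ∀ i : Fin 3, ∃ q : ℚ, a i = (q : ℝ)

lemma refl_formula (v x : V3) :
    (Submodule.reflection (ℝ ∙ v)ᗮ : V3 ≃ₗᵢ[ℝ] V3) x
      = x - ((2 * (inner ℝ v x : ℝ)) / ‖v‖ ^ 2) • v := by
  rw [Submodule.reflection_orthogonal_apply, Submodule.reflection_singleton_apply, neg_sub]
  congr 1
  rw [two_smul]
  simp only [RCLike.ofReal_real_eq_id, id]
  module

lemma inner_rat {v x : V3} (hv : IsRatVec v) (hx : IsRatVec x) :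
    ∃ q : ℚ, (inner ℝ v x : ℝ) = (q : ℝ) := by
  choose qv hqv using hv
  choose qx hqx using hx
  refine ⟨∑ i, qv i * qx i, ?_⟩
  rw [PiLp.inner_apply]
  push_cast
  refine Finset.sum_congr rfl fun i _ => ?_
  simp [hqv i, hqx i, mul_comm]

lemma norm_sq_rat {v : V3} (hv : IsRatVec v) : ∃ q : ℚ, ‖v‖ ^ 2 = (q : ℝ) := by
  obtain ⟨q, hq⟩ := inner_rat hv hv
  exact ⟨q, by rw [← real_inner_self_eq_norm_sq, hq]⟩

lemma refl_ratMap {v : V3} (hv : IsRatVec v) {x : V3} (hx : IsRatVec x) :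
    IsRatVec ((Submodule.reflection (ℝ ∙ v)ᗮ : V3 ≃ₗᵢ[ℝ] V3) x) := by
  obtain ⟨q1, hq1⟩ := inner_rat hv hx
  obtain ⟨q2, hq2⟩ := norm_sq_rat hv
  intro i
  obtain ⟨qx, hqx⟩ := hx i
  obtain ⟨qv, hqv⟩ := hv i
  refine ⟨qx - (2 * q1 / q2) * qv, ?_⟩
  rw [refl_formula]
  simp only [PiLp.sub_apply, PiLp.smul_apply, smul_eq_mul, hq1, hq2, hqx, hqv]
  push_cast
  ring

lemma ratVec_dense (v : V3) {δ : ℝ} (hδ : 0 < δ) :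
    ∃ w : V3, IsRatVec w ∧ ‖w - v‖ < δ := by
  have h2 : 0 < δ / 2 := by linarith
  have H : ∀ i : Fin 3, ∃ q : ℚ, |v i - (q : ℝ)| < δ / 2 := fun i => exists_rat_near (v i) h2
  choose q hq using H
  set w : V3 := WithLp.toLp 2 (fun i => (q i : ℝ)) with hw
  refine ⟨w, fun i => ⟨q i, rfl⟩, ?_⟩
  rw [EuclideanSpace.norm_eq, Real.sqrt_lt' hδ]
  have hb : ∀ i : Fin 3, ‖(w - v) i‖ ^ 2 ≤ (δ/2) ^ 2 := by
    intro i
    have h1 : |(w - v) i| ≤ δ / 2 := by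
      have : (w - v) i = -(v i - (q i : ℝ)) := by
        simp [hw, PiLp.sub_apply]
      rw [this, abs_neg]
      exact (hq i).le
    rw [Real.norm_eq_abs]
    exact pow_le_pow_left₀ (abs_nonneg _) h1 2
  calc (∑ i : Fin 3, ‖(w - v) i‖ ^ 2)
      ≤ ∑ _i : Fin 3, (δ/2)^2 := Finset.sum_le_sum fun i _ => hb i
    _ = 3 * (δ/2)^2 := by simp [Finset.sum_const]
    _ < δ ^ 2 := by nlinarith

lemma approx_reflection (v : V3) {δ : ℝ} (hδ : 0 < δ) :
    ∃ w : V3, IsRatVec w ∧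
      ∀ x : V3, ‖(Submodule.reflection (ℝ ∙ w)ᗮ : V3 ≃ₗᵢ[ℝ] V3) x
        - (Submodule.reflection (ℝ ∙ v)ᗮ : V3 ≃ₗᵢ[ℝ] V3) x‖ ≤ δ * ‖x‖ := by
  by_cases hv : v = 0
  · refine ⟨0, fun i => ⟨0, by simp⟩, fun x => ?_⟩
    subst hv
    simp only [sub_self, norm_zero]
    positivity
  · set G : V3 → (V3 →L[ℝ] V3) :=
      fun u => (2 / ‖u‖ ^ 2) • ((innerSL ℝ u).smulRight u) with hG
    have hGx : ∀ u x, (Submodule.reflection (ℝ ∙ u)ᗮ : V3 ≃ₗᵢ[ℝ] V3) x = x - G u x := by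
      intro u x
      rw [refl_formula]
      congr 1
      simp only [hG, ContinuousLinearMap.smul_apply, ContinuousLinearMap.smulRight_apply,
        innerSL_apply_apply, smul_smul]
      congr 1
      ring
    have hnv : ‖v‖ ^ 2 ≠ 0 := by
      have := norm_ne_zero_iff.mpr hv
      positivity
    have hc : ContinuousAt G v := by
      rw [hG]
      apply ContinuousAt.fun_smul
      · exact (continuousAt_const.div ((continuous_norm.pow 2).continuousAt) hnv)
      · exact (((ContinuousLinearMap.smulRightL ℝ V3 V3).continuous₂).comp
          (((innerSL ℝ).continuous).prodMk continuous_id)).continuousAt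
    rw [Metric.continuousAt_iff] at hc
    obtain ⟨r, hr, hball⟩ := hc δ hδ
    obtain ⟨w, hwrat, hwv⟩ := ratVec_dense v hr
    have hdist : dist (G w) (G v) < δ := hball (by rwa [dist_eq_norm])
    refine ⟨w, hwrat, fun x => ?_⟩
    rw [hGx, hGx]
    calc ‖(x - G w x) - (x - G v x)‖ = ‖(G v - G w) x‖ := by
          rw [ContinuousLinearMap.sub_apply]; congr 1; abel
      _ ≤ ‖G v - G w‖ * ‖x‖ := (G v - G w).le_opNorm x
      _ ≤ δ * ‖x‖ := by
          apply mul_le_mul_of_nonneg_right _ (norm_nonneg x)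
          rw [norm_sub_rev]
          rw [dist_eq_norm] at hdist
          exact hdist.le

lemma list_prod_approx {δ : ℝ} :
    ∀ {l l' : List (V3 ≃ₗᵢ[ℝ] V3)},
      List.Forall₂ (fun f g => ∀ x, ‖f x - g x‖ ≤ δ * ‖x‖) l l' →
      ∀ x, ‖l.prod x - l'.prod x‖ ≤ l.length * δ * ‖x‖ := by
  intro l l' h
  induction h with
  | nil => intro x; simp
  | @cons f g l₁ l₂ hfg _ IH =>
    intro x
    rw [List.prod_cons, List.prod_cons]
    have h1 : (f * l₁.prod) x = f (l₁.prod x) := rfl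
    have h2 : (g * l₂.prod) x = g (l₂.prod x) := rfl
    rw [h1, h2]
    have tri : ‖f (l₁.prod x) - g (l₂.prod x)‖
        ≤ ‖f (l₁.prod x) - g (l₁.prod x)‖ + ‖g (l₁.prod x) - g (l₂.prod x)‖ := by
      have := norm_add_le (f (l₁.prod x) - g (l₁.prod x)) (g (l₁.prod x) - g (l₂.prod x))
      rwa [sub_add_sub_cancel] at this
    have e1 : ‖g (l₁.prod x) - g (l₂.prod x)‖ = ‖l₁.prod x - l₂.prod x‖ := by
      rw [← map_sub g, g.norm_map]
    have e2 : ‖l₁.prod x‖ = ‖x‖ := (l₁.prod).norm_map x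
    calc ‖f (l₁.prod x) - g (l₂.prod x)‖
        ≤ ‖f (l₁.prod x) - g (l₁.prod x)‖ + ‖l₁.prod x - l₂.prod x‖ := by rw [← e1]; exact tri
      _ ≤ δ * ‖x‖ + l₁.length * δ * ‖x‖ := by
          refine add_le_add ?_ (IH x)
          have := hfg (l₁.prod x)
          rwa [e2] at this
      _ = (l₁.length + 1) * δ * ‖x‖ := by ring
      _ = (f :: l₁).length * δ * ‖x‖ := by
          rw [List.length_cons]; push_cast; ring

lemma prod_ratMap : ∀ (l : List (V3 ≃ₗᵢ[ℝ] V3)),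
    (∀ f ∈ l, ∀ x, IsRatVec x → IsRatVec (f x)) →
    ∀ x, IsRatVec x → IsRatVec (l.prod x) := by
  intro l
  induction l with
  | nil => intro _ x hx; simpa using hx
  | cons f t IH =>
    intro h x hx
    rw [List.prod_cons]
    show IsRatVec (f (t.prod x))
    exact h f List.mem_cons_self _
      (IH (fun g hg => h g (List.mem_cons_of_mem _ hg)) x hx)

lemma approx_list {δ : ℝ} (hδ : 0 < δ) : ∀ l : List V3, ∃ l' : List V3,
    (∀ w ∈ l', IsRatVec w) ∧
    List.Forall₂ (fun w v => ∀ x, ‖(Submodule.reflection (ℝ ∙ w)ᗮ : V3 ≃ₗᵢ[ℝ] V3) x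
      - (Submodule.reflection (ℝ ∙ v)ᗮ : V3 ≃ₗᵢ[ℝ] V3) x‖ ≤ δ * ‖x‖) l' l := by
  intro l
  induction l with
  | nil => exact ⟨[], by simp, List.Forall₂.nil⟩
  | cons v t IH =>
    obtain ⟨t', ht'r, ht'⟩ := IH
    obtain ⟨w, hwr, hw⟩ := approx_reflection v hδ
    refine ⟨w :: t', ?_, List.Forall₂.cons hw ht'⟩
    intro u hu
    rcases List.mem_cons.mp hu with h | h
    · subst h; exact hwr
    · exact ht'r u h

/-- Meyer's density theorem: rational frames are dense in the set of all frames (in the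
line-identified sense: each direction of a frame is approximated, up to sign, by a
direction of a rational frame). -/
theorem rational_frames_dense :
    ∀ a : Frame, ∀ ε : ℝ, 0 < ε → ∃ b : Frame,
      (∀ k : Fin 3, IsRatVec (b.1 k)) ∧
      ∀ i : Fin 3, ∃ j : Fin 3, min ‖a.1 i - b.1 j‖ ‖a.1 i + b.1 j‖ < ε := by
  intro a ε hε
  have hcard : Fintype.card (Fin 3) = Module.finrank ℝ V3 := by
    simp [finrank_euclideanSpace_fin]
  let B : Module.Basis (Fin 3) ℝ V3 := basisOfOrthonormalOfCardEqFinrank a.2 hcard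
  have hB : Orthonormal ℝ ⇑B := by
    rw [coe_basisOfOrthonormalOfCardEqFinrank]; exact a.2
  let EB := EuclideanSpace.basisFun (Fin 3) ℝ
  have hEB : Orthonormal ℝ ⇑EB.toBasis := by
    rw [EB.coe_toBasis]; exact EB.orthonormal
  let T : V3 ≃ₗᵢ[ℝ] V3 := hEB.equiv hB (Equiv.refl _)
  have hT : ∀ i : Fin 3, T (EuclideanSpace.single i 1) = a.1 i := by
    intro i
    have h1 : EB.toBasis i = EuclideanSpace.single i 1 := by
      simp [EB, EuclideanSpace.basisFun_apply]
    have h2 := hEB.equiv_apply (hv' := hB) (e := Equiv.refl (Fin 3)) i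
    rw [h1] at h2
    rw [show (T : V3 ≃ₗᵢ[ℝ] V3) = hEB.equiv hB (Equiv.refl _) from rfl, h2]
    simp [B, coe_basisOfOrthonormalOfCardEqFinrank]
  obtain ⟨l, -, hTl⟩ := T.reflections_generate_dim
  set n := l.length with hn
  set δ := ε / (n + 1) with hδdef
  have hδ : 0 < δ := by positivity
  obtain ⟨l', hl'r, hF⟩ := approx_list hδ l
  set T' := (l'.map fun v => (Submodule.reflection (ℝ ∙ v)ᗮ : V3 ≃ₗᵢ[ℝ] V3)).prod with hT'def
  have hsingle_rat : ∀ k : Fin 3, IsRatVec (EuclideanSpace.single k (1:ℝ)) := by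
    intro k i
    refine ⟨if i = k then 1 else 0, ?_⟩
    rw [EuclideanSpace.single_apply]
    split <;> simp
  have hon : Orthonormal ℝ (fun k : Fin 3 => T' (EuclideanSpace.single k (1:ℝ))) := by
    have h0 : Orthonormal ℝ (fun k : Fin 3 => (EuclideanSpace.single k (1:ℝ) : V3)) := by
      have := EB.orthonormal
      convert this using 2
      · rfl
      simp [EB, EuclideanSpace.basisFun_apply]
    exact h0.comp_linearIsometryEquiv T'
  refine ⟨⟨fun k => T' (EuclideanSpace.single k 1), hon⟩, ?_, ?_⟩
  · intro k
    apply prod_ratMap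
    · intro f hf x hx
      obtain ⟨w, hwl', rfl⟩ := List.mem_map.mp hf
      exact refl_ratMap (hl'r w hwl') hx
    · exact hsingle_rat k
  · intro i
    refine ⟨i, ?_⟩
    have hF2 : List.Forall₂ (fun f g : V3 ≃ₗᵢ[ℝ] V3 => ∀ x, ‖f x - g x‖ ≤ δ * ‖x‖)
        (l'.map fun v => (Submodule.reflection (ℝ ∙ v)ᗮ : V3 ≃ₗᵢ[ℝ] V3))
        (l.map fun v => (Submodule.reflection (ℝ ∙ v)ᗮ : V3 ≃ₗᵢ[ℝ] V3)) := by
      rw [List.forall₂_map_left_iff, List.forall₂_map_right_iff]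
      exact hF.imp fun _ _ h => h

    have hlen : l'.length = n := hF.length_eq
    have key := list_prod_approx hF2 (EuclideanSpace.single i 1)
    rw [List.length_map, hlen] at key
    have hxnorm : ‖(EuclideanSpace.single i (1:ℝ) : V3)‖ = 1 := by
      rw [EuclideanSpace.norm_single]; simp
    rw [hxnorm, mul_one] at key
    have haT : a.1 i = (l.map fun v => (Submodule.reflection (ℝ ∙ v)ᗮ : V3 ≃ₗᵢ[ℝ] V3)).prod
        (EuclideanSpace.single i 1) := by
      rw [← hT i, hTl]
    have hmain : ‖a.1 i - T' (EuclideanSpace.single i 1)‖ ≤ n * δ := by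
      rw [haT, norm_sub_rev]
      exact key
    have hfin : (n : ℝ) * δ < ε := by
      rw [hδdef]
      rw [mul_div_assoc']
      rw [div_lt_iff₀ (by positivity : (0:ℝ) < (n:ℝ) + 1)]
      nlinarith
    calc min ‖a.1 i - T' (EuclideanSpace.single i 1)‖ ‖a.1 i + T' (EuclideanSpace.single i 1)‖
        ≤ ‖a.1 i - T' (EuclideanSpace.single i 1)‖ := min_le_left _ _
      _ ≤ n * δ := hmain
      _ < ε := hfin
end
end

section
/- There exists a set 𝓞 of frames in ℝ³ that is dense in the set 𝓕 of all frames (i.e., for every frame (a₁,a₂,a₃) and every ε > 0 there is a frame (b₁,b₂,b₃) ∈ 𝓞 such that for each i there is a j with min(‖aᵢ - bⱼ‖, ‖aᵢ + bⱼ‖) < ε) and whose members are totally incompatible: any two distinct frames in 𝓞 share no line, i.e., for all 𝐚 ≠ 𝐚' in 𝓞 and all indices i, j, aᵢ ≠ ±a'ⱼ. Consequently 𝓞 admits a frame function. -/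
noncomputable section

open Real Set

lemma sameLine_symm {u v : V3} (h : SameLine u v) : SameLine v u := by
  rcases h with h | h
  · exact Or.inl h.symm
  · exact Or.inr (by rw [h, neg_neg])

lemma frame_eq_of_sameLine (a : Frame) (i j : Fin 3) (h : SameLine (a.1 i) (a.1 j)) :
    i = j := by
  by_contra hne
  have hij := orthonormal_iff_ite.mp a.2 i j
  have hjj := orthonormal_iff_ite.mp a.2 j j
  simp only [if_neg hne, if_pos rfl] at hij hjj
  rcases h with h | h
  · rw [h, hjj] at hij; norm_num at hij
  · rw [h, inner_neg_left, hjj] at hij; norm_num at hij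

lemma exists_cos_not_mem {δ : ℝ} (hδ : 0 < δ) (hδ1 : δ ≤ 1) (S : Set ℝ) (hS : S.Finite) :
    ∃ θ ∈ Ioo (0:ℝ) δ, Real.cos θ ∉ S := by
  have hsub : Ioo (0:ℝ) δ ⊆ Icc 0 π := fun x hx =>
    ⟨hx.1.le, le_trans (hx.2.le.trans hδ1) (by linarith [Real.pi_gt_three])⟩
  have hbad : (Ioo (0:ℝ) δ ∩ Real.cos ⁻¹' S).Finite := by
    apply Set.Finite.of_finite_image (f := Real.cos)
    · exact hS.subset (by rintro y ⟨x, ⟨-, hx⟩, rfl⟩; exact hx)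
    · exact Real.injOn_cos.mono (Set.inter_subset_left.trans hsub)
  obtain ⟨θ, hθ⟩ := ((Set.Ioo_infinite hδ).diff hbad).nonempty
  exact ⟨θ, hθ.1, fun hmem => hθ.2 ⟨hθ.1, hmem⟩⟩

set_option maxHeartbeats 1000000 in
/-- Key perturbation lemma: near any frame there is a frame avoiding finitely many lines. -/
lemma perturb (a : Frame) (ε : ℝ) (hε : 0 < ε) (F : Set V3) (hF : F.Finite) :
    ∃ b : Frame, (∀ i, ‖a.1 i - b.1 i‖ < ε) ∧ ∀ i, ∀ v ∈ F, ¬ SameLine (b.1 i) v := by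
  classical
  set δ : ℝ := min (ε/8) 1 with hδdef
  have hδ0 : 0 < δ := lt_min (by linarith) one_pos
  have hδ1 : δ ≤ 1 := min_le_right _ _
  have hδε : δ ≤ ε/8 := min_le_left _ _
  have h := orthonormal_iff_ite.mp a.2
  have h00 : (inner ℝ (a.1 0) (a.1 0) : ℝ) = 1 := by simpa using h 0 0
  have h11 : (inner ℝ (a.1 1) (a.1 1) : ℝ) = 1 := by simpa using h 1 1
  have h22 : (inner ℝ (a.1 2) (a.1 2) : ℝ) = 1 := by simpa using h 2 2
  have h01 : (inner ℝ (a.1 0) (a.1 1) : ℝ) = 0 := by simpa using h 0 1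
  have h10 : (inner ℝ (a.1 1) (a.1 0) : ℝ) = 0 := by simpa using h 1 0
  have h02 : (inner ℝ (a.1 0) (a.1 2) : ℝ) = 0 := by simpa using h 0 2
  have h20 : (inner ℝ (a.1 2) (a.1 0) : ℝ) = 0 := by simpa using h 2 0
  have h12 : (inner ℝ (a.1 1) (a.1 2) : ℝ) = 0 := by simpa using h 1 2
  have h21 : (inner ℝ (a.1 2) (a.1 1) : ℝ) = 0 := by simpa using h 2 1
  obtain ⟨θ, hθI, hθ⟩ := exists_cos_not_mem hδ0 hδ1
    (((fun v => (inner ℝ v (a.1 0) : ℝ)) '' F) ∪ ((fun v => -(inner ℝ v (a.1 0) : ℝ)) '' F))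
    ((hF.image _).union (hF.image _))
  set c1 : V3 := Real.cos θ • a.1 0 + Real.sin θ • a.1 1 with hc1
  set u : V3 := (-Real.sin θ) • a.1 0 + Real.cos θ • a.1 1 with hu
  have pyθ := Real.sin_sq_add_cos_sq θ
  have huu : (inner ℝ u u : ℝ) = 1 := by
    simp only [hu, inner_add_left, inner_add_right, real_inner_smul_left, real_inner_smul_right,
      h00, h11, h01, h10]
    linear_combination pyθ
  have hu2 : (inner ℝ (a.1 2) u : ℝ) = 0 := by
    simp only [hu, inner_add_right, real_inner_smul_right, h20, h21]
    ring
  have hu2' : (inner ℝ u (a.1 2) : ℝ) = 0 := by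
    simp only [hu, inner_add_left, real_inner_smul_left, h02, h12]
    ring
  obtain ⟨φ, hφI, hφ⟩ := exists_cos_not_mem hδ0 hδ1
    ((((fun v => (inner ℝ v u : ℝ)) '' F) ∪ ((fun v => -(inner ℝ v u : ℝ)) '' F)) ∪
     (((fun v => (inner ℝ v (a.1 2) : ℝ)) '' F) ∪ ((fun v => -(inner ℝ v (a.1 2) : ℝ)) '' F)))
    (((hF.image _).union (hF.image _)).union ((hF.image _).union (hF.image _)))
  set c2 : V3 := Real.cos φ • u + Real.sin φ • a.1 2 with hc2
  set c3 : V3 := (-Real.sin φ) • u + Real.cos φ • a.1 2 with hc3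
  have pyφ := Real.sin_sq_add_cos_sq φ
  have e11 : (inner ℝ c1 c1 : ℝ) = 1 := by
    simp only [hc1, inner_add_left, inner_add_right, real_inner_smul_left,
      real_inner_smul_right, h00, h11, h01, h10]
    linear_combination pyθ
  have ec1u : (inner ℝ c1 u : ℝ) = 0 := by
    simp only [hc1, hu, inner_add_left, inner_add_right, real_inner_smul_left,
      real_inner_smul_right, h00, h11, h01, h10]
    ring
  have euc1 : (inner ℝ u c1 : ℝ) = 0 := by
    simp only [hc1, hu, inner_add_left, inner_add_right, real_inner_smul_left,
      real_inner_smul_right, h00, h11, h01, h10]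
    ring
  have ec1a3 : (inner ℝ c1 (a.1 2) : ℝ) = 0 := by
    simp only [hc1, inner_add_left, real_inner_smul_left, h02, h12]
    ring
  have ea3c1 : (inner ℝ (a.1 2) c1 : ℝ) = 0 := by
    simp only [hc1, inner_add_right, real_inner_smul_right, h20, h21]
    ring
  have e12 : (inner ℝ c1 c2 : ℝ) = 0 := by
    simp only [hc2, inner_add_right, real_inner_smul_right, ec1u, ec1a3]
    ring
  have e21 : (inner ℝ c2 c1 : ℝ) = 0 := by
    simp only [hc2, inner_add_left, real_inner_smul_left, euc1, ea3c1]
    ring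
  have e13 : (inner ℝ c1 c3 : ℝ) = 0 := by
    simp only [hc3, inner_add_right, real_inner_smul_right, ec1u, ec1a3]
    ring
  have e31 : (inner ℝ c3 c1 : ℝ) = 0 := by
    simp only [hc3, inner_add_left, real_inner_smul_left, euc1, ea3c1]
    ring
  have e22 : (inner ℝ c2 c2 : ℝ) = 1 := by
    simp only [hc2, inner_add_left, inner_add_right, real_inner_smul_left,
      real_inner_smul_right, huu, hu2, hu2', h22]
    linear_combination pyφ
  have e33 : (inner ℝ c3 c3 : ℝ) = 1 := by
    simp only [hc3, inner_add_left, inner_add_right, real_inner_smul_left,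
      real_inner_smul_right, huu, hu2, hu2', h22]
    linear_combination pyφ
  have e23 : (inner ℝ c2 c3 : ℝ) = 0 := by
    simp only [hc2, hc3, inner_add_left, inner_add_right, real_inner_smul_left,
      real_inner_smul_right, huu, hu2, hu2', h22]
    ring
  have e32 : (inner ℝ c3 c2 : ℝ) = 0 := by
    simp only [hc2, hc3, inner_add_left, inner_add_right, real_inner_smul_left,
      real_inner_smul_right, huu, hu2, hu2', h22]
    ring
  have hON : Orthonormal ℝ ![c1, c2, c3] := by
    rw [orthonormal_iff_ite]
    intro i j
    fin_cases i <;> fin_cases j <;>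
      simp [-inner_self_eq_norm_sq_to_K, e11, e12, e13, e21, e22, e23, e31, e32, e33]
  -- basic bounds
  obtain ⟨hθ0, hθδ⟩ := hθI
  obtain ⟨hφ0, hφδ⟩ := hφI
  have hθπ : θ ≤ π := by linarith [Real.pi_gt_three]
  have hφπ : φ ≤ π := by linarith [Real.pi_gt_three]
  have hsθ : 0 ≤ Real.sin θ := Real.sin_nonneg_of_nonneg_of_le_pi hθ0.le hθπ
  have hsφ : 0 ≤ Real.sin φ := Real.sin_nonneg_of_nonneg_of_le_pi hφ0.le hφπ
  have hsθ' : Real.sin θ < δ := lt_of_le_of_lt (Real.sin_le hθ0.le) hθδ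
  have hsφ' : Real.sin φ < δ := lt_of_le_of_lt (Real.sin_le hφ0.le) hφδ
  have hcθ : 0 ≤ 1 - Real.cos θ := by linarith [Real.cos_le_one θ]
  have hcφ : 0 ≤ 1 - Real.cos φ := by linarith [Real.cos_le_one φ]
  have hcθ' : 1 - Real.cos θ < δ := by
    have hb := Real.one_sub_sq_div_two_le_cos (x := θ)
    have hsq : θ^2 ≤ θ := by
      rw [sq]; exact mul_le_of_le_one_left hθ0.le (by linarith)
    linarith
  have hcφ' : 1 - Real.cos φ < δ := by
    have hb := Real.one_sub_sq_div_two_le_cos (x := φ)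
    have hsq : φ^2 ≤ φ := by
      rw [sq]; exact mul_le_of_le_one_left hφ0.le (by linarith)
    linarith
  have hnorm : ∀ i, ‖a.1 i‖ = 1 := a.2.1
  have hnu : ‖u‖ ≤ 2 := by
    calc ‖u‖ ≤ ‖(-Real.sin θ) • a.1 0‖ + ‖Real.cos θ • a.1 1‖ := norm_add_le _ _
    _ = |(-Real.sin θ)| * 1 + |Real.cos θ| * 1 := by
        rw [norm_smul, norm_smul, hnorm 0, hnorm 1, Real.norm_eq_abs, Real.norm_eq_abs]
    _ ≤ 1 * 1 + 1 * 1 := by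
        have h1 := Real.abs_sin_le_one θ
        have h2 := Real.abs_cos_le_one θ
        rw [abs_neg]
        linarith [h1, h2]
    _ = 2 := by norm_num
  refine ⟨⟨![c1, c2, c3], hON⟩, ?_, ?_⟩
  · -- closeness
    intro i
    fin_cases i
    · show ‖a.1 0 - c1‖ < ε
      have he : a.1 0 - c1 = (1 - Real.cos θ) • a.1 0 + (-Real.sin θ) • a.1 1 := by
        rw [hc1]; module
      rw [he]
      calc ‖(1 - Real.cos θ) • a.1 0 + (-Real.sin θ) • a.1 1‖
          ≤ ‖(1 - Real.cos θ) • a.1 0‖ + ‖(-Real.sin θ) • a.1 1‖ := norm_add_le _ _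
      _ = |1 - Real.cos θ| * 1 + |(-Real.sin θ)| * 1 := by
            rw [norm_smul, norm_smul, hnorm 0, hnorm 1, Real.norm_eq_abs, Real.norm_eq_abs]
      _ < ε := by
            rw [abs_of_nonneg hcθ, abs_neg, abs_of_nonneg hsθ]
            linarith
    · show ‖a.1 1 - c2‖ < ε
      have he : a.1 1 - c2 = ((Real.sin θ) • a.1 0 + (1 - Real.cos θ) • a.1 1)
          + (((1 - Real.cos φ)) • u + (-Real.sin φ) • a.1 2) := by
        rw [hc2, hu]; module
      rw [he]
      calc ‖((Real.sin θ) • a.1 0 + (1 - Real.cos θ) • a.1 1)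
            + (((1 - Real.cos φ)) • u + (-Real.sin φ) • a.1 2)‖
          ≤ (‖(Real.sin θ) • a.1 0‖ + ‖(1 - Real.cos θ) • a.1 1‖)
            + (‖((1 - Real.cos φ)) • u‖ + ‖(-Real.sin φ) • a.1 2‖) := by
            refine le_trans (norm_add_le _ _) ?_
            gcongr <;> exact norm_add_le _ _
      _ ≤ (|Real.sin θ| * 1 + |1 - Real.cos θ| * 1)
            + (|(1 - Real.cos φ)| * 2 + |(-Real.sin φ)| * 1) := by
            rw [norm_smul, norm_smul, norm_smul, norm_smul, hnorm 0, hnorm 1, hnorm 2]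
            simp only [Real.norm_eq_abs]
            gcongr
      _ < ε := by
            rw [abs_of_nonneg hsθ, abs_of_nonneg hcθ, abs_of_nonneg hcφ,
              abs_neg, abs_of_nonneg hsφ]
            linarith
    · show ‖a.1 2 - c3‖ < ε
      have he : a.1 2 - c3 = (Real.sin φ) • u + (1 - Real.cos φ) • a.1 2 := by
        rw [hc3]; module
      rw [he]
      calc ‖(Real.sin φ) • u + (1 - Real.cos φ) • a.1 2‖
          ≤ ‖(Real.sin φ) • u‖ + ‖(1 - Real.cos φ) • a.1 2‖ := norm_add_le _ _
      _ ≤ |Real.sin φ| * 2 + |1 - Real.cos φ| * 1 := by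
            rw [norm_smul, norm_smul, hnorm 2]
            simp only [Real.norm_eq_abs]
            gcongr
      _ < ε := by
            rw [abs_of_nonneg hsφ, abs_of_nonneg hcφ]
            linarith
  · -- avoidance
    intro i v hv hSL
    fin_cases i
    · apply hθ
      replace hSL : SameLine c1 v := hSL
      have hic : (inner ℝ c1 (a.1 0) : ℝ) = Real.cos θ := by
        simp only [hc1, inner_add_left, real_inner_smul_left, h00, h10]
        ring
      rcases hSL with hE | hE
      · exact Or.inl ⟨v, hv, by show (inner ℝ v (a.1 0) : ℝ) = _; rw [← hE, hic]⟩
      · refine Or.inr ⟨v, hv, ?_⟩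
        show -(inner ℝ v (a.1 0) : ℝ) = _
        have hx : (inner ℝ c1 (a.1 0) : ℝ) = -(inner ℝ v (a.1 0) : ℝ) := by
          rw [hE, inner_neg_left]
        rw [← hx, hic]
    · apply hφ
      replace hSL : SameLine c2 v := hSL
      have hic : (inner ℝ c2 u : ℝ) = Real.cos φ := by
        simp only [hc2, inner_add_left, real_inner_smul_left, huu, hu2]
        ring
      rcases hSL with hE | hE
      · exact Or.inl (Or.inl ⟨v, hv, by show (inner ℝ v u : ℝ) = _; rw [← hE, hic]⟩)
      · refine Or.inl (Or.inr ⟨v, hv, ?_⟩)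
        show -(inner ℝ v u : ℝ) = _
        have hx : (inner ℝ c2 u : ℝ) = -(inner ℝ v u : ℝ) := by rw [hE, inner_neg_left]
        rw [← hx, hic]
    · apply hφ
      replace hSL : SameLine c3 v := hSL
      have hic : (inner ℝ c3 (a.1 2) : ℝ) = Real.cos φ := by
        simp only [hc3, inner_add_left, real_inner_smul_left, hu2', h22]
        ring
      rcases hSL with hE | hE
      · exact Or.inr (Or.inl ⟨v, hv, by show (inner ℝ v (a.1 2) : ℝ) = _; rw [← hE, hic]⟩)
      · refine Or.inr (Or.inr ⟨v, hv, ?_⟩)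
        show -(inner ℝ v (a.1 2) : ℝ) = _
        have hx : (inner ℝ c3 (a.1 2) : ℝ) = -(inner ℝ v (a.1 2) : ℝ) := by
          rw [hE, inner_neg_left]
        rw [← hx, hic]

/-- Choose one frame near `t n` avoiding the given finite family of lines. -/
def nextFrame (t : ℕ → Frame) (p : ℕ → ℝ) (hp : ∀ n, 0 < p n) (n : ℕ)
    (prev : Fin n × Fin 3 → V3) : Frame :=
  Classical.choose (perturb (t n) (p n) (hp n) (Set.range prev) (Set.finite_range _))

lemma nextFrame_spec (t : ℕ → Frame) (p : ℕ → ℝ) (hp : ∀ n, 0 < p n) (n : ℕ)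
    (prev : Fin n × Fin 3 → V3) :
    (∀ i, ‖(t n).1 i - (nextFrame t p hp n prev).1 i‖ < p n) ∧
      ∀ i, ∀ v ∈ Set.range prev, ¬ SameLine ((nextFrame t p hp n prev).1 i) v :=
  Classical.choose_spec (perturb (t n) (p n) (hp n) (Set.range prev) (Set.finite_range _))

/-- The recursively chosen totally incompatible sequence of frames. -/
def chain (t : ℕ → Frame) (p : ℕ → ℝ) (hp : ∀ n, 0 < p n) : ℕ → Frame :=
  fun n => nextFrame t p hp n (fun q => (chain t p hp q.1).1 q.2)
termination_by n => n
decreasing_by exact q.1.isLt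

lemma chain_eq (t : ℕ → Frame) (p : ℕ → ℝ) (hp : ∀ n, 0 < p n) (n : ℕ) :
    chain t p hp n = nextFrame t p hp n (fun q => (chain t p hp q.1).1 q.2) := by
  rw [chain]

lemma chain_close (t : ℕ → Frame) (p : ℕ → ℝ) (hp : ∀ n, 0 < p n) (n : ℕ) (i : Fin 3) :
    ‖(t n).1 i - (chain t p hp n).1 i‖ < p n := by
  rw [chain_eq]
  exact (nextFrame_spec t p hp n _).1 i

lemma chain_incomp (t : ℕ → Frame) (p : ℕ → ℝ) (hp : ∀ n, 0 < p n) {m n : ℕ} (h : m < n)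
    (i j : Fin 3) : ¬ SameLine ((chain t p hp n).1 i) ((chain t p hp m).1 j) := by
  have hs := (nextFrame_spec t p hp n (fun q => (chain t p hp q.1).1 q.2)).2 i
    ((chain t p hp m).1 j) ⟨(⟨m, h⟩, j), rfl⟩
  rw [chain_eq t p hp n]
  exact hs

/-- The Clifton–Kent construction: there is a set `O` of frames that is dense in the set of
all frames (in the line-identified sense), whose members are totally incompatible (distinct
frames in `O` share no line), and which consequently admits a frame function. -/
theorem clifton_kent :
    ∃ O : Set Frame,
      (∀ a : Frame, ∀ ε : ℝ, 0 < ε → ∃ b ∈ O, ∀ i : Fin 3, ∃ j : Fin 3,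
          min ‖a.1 i - b.1 j‖ ‖a.1 i + b.1 j‖ < ε) ∧
      (∀ a ∈ O, ∀ a' ∈ O, a ≠ a' → ∀ i j : Fin 3, ¬ SameLine (a.1 i) (a'.1 j)) ∧
      (∃ l : ↥O → ↥Tset, ∀ a a' : ↥O, ∀ i j : Fin 3,
          SameLine (a.1.1 i) (a'.1.1 j) → (l a).1 i = (l a').1 j) := by
  classical
  haveI : Nonempty Frame :=
    ⟨⟨(EuclideanSpace.basisFun (Fin 3) ℝ), (EuclideanSpace.basisFun (Fin 3) ℝ).orthonormal⟩⟩
  obtain ⟨u, hu⟩ := TopologicalSpace.exists_dense_seq Frame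
  set t : ℕ → Frame := fun n => u n.unpair.1 with ht
  set p : ℕ → ℝ := fun n => 1 / ((n.unpair.2 : ℝ) + 1) with hpdef
  have hp : ∀ n, 0 < p n := fun n => by positivity
  set b : ℕ → Frame := chain t p hp with hb
  have hinc : ∀ x : ℕ, ∀ y : ℕ, b x ≠ b y → ∀ i j : Fin 3,
      ¬ SameLine ((b x).1 i) ((b y).1 j) := by
    intro x y hne i j hSL
    rcases lt_trichotomy x y with hlt | hEq | hlt
    · exact chain_incomp t p hp hlt j i (sameLine_symm hSL)
    · exact hne (by rw [hEq])
    · exact chain_incomp t p hp hlt i j hSL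
  refine ⟨Set.range b, ?_, ?_, ?_⟩
  · -- density
    intro a ε hε
    obtain ⟨k, hk⟩ := exists_nat_one_div_lt (half_pos hε)
    obtain ⟨m, hm⟩ := hu.exists_dist_lt a (half_pos hε)
    set n := Nat.pair m k with hn
    refine ⟨b n, Set.mem_range_self n, fun i => ⟨i, ?_⟩⟩
    have h1 : ‖a.1 i - (u m).1 i‖ ≤ dist a (u m) := by
      rw [Subtype.dist_eq]
      have hle := dist_le_pi_dist (a.1) ((u m).1) i
      rwa [dist_eq_norm] at hle
    have h2 : ‖(t n).1 i - (b n).1 i‖ < p n := chain_close t p hp n i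
    have ht' : t n = u m := by simp [ht, hn]
    have hp' : p n = 1 / ((k : ℝ) + 1) := by simp [hpdef, hn]
    rw [ht', hp'] at h2
    have hfin : ‖a.1 i - (b n).1 i‖ < ε := by
      calc ‖a.1 i - (b n).1 i‖ ≤ ‖a.1 i - (u m).1 i‖ + ‖(u m).1 i - (b n).1 i‖ := by
            have hsplit : a.1 i - (b n).1 i
                = (a.1 i - (u m).1 i) + ((u m).1 i - (b n).1 i) := by abel
            rw [hsplit]; exact norm_add_le _ _
      _ < ε / 2 + ε / 2 := by
            have hkk : (1 : ℝ) / ((k : ℝ) + 1) < ε / 2 := by exact_mod_cast hk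
            have h1' := lt_of_le_of_lt h1 hm
            linarith
      _ = ε := by ring
    exact lt_of_le_of_lt (min_le_left _ _) hfin
  · -- total incompatibility
    rintro x ⟨m, rfl⟩ y ⟨n, rfl⟩ hne i j hSL
    exact hinc m n hne i j hSL
  · -- frame function
    refine ⟨fun _ => ⟨![1, 1, 0], by left; rfl⟩, ?_⟩
    intro a a' i j hSL
    by_cases hE : a.1 = a'.1
    · rw [← hE] at hSL
      have hij := frame_eq_of_sameLine a.1 i j hSL
      rw [hij]
    · exfalso
      obtain ⟨x, hx⟩ := a.2
      obtain ⟨y, hy⟩ := a'.2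
      rw [← hx, ← hy] at hSL hE
      exact hinc x y (fun hxy => hE (by rw [hxy])) i j hSL
end
end

section
/- Determinism, Parameter Independence, Freedom, the Identification Principle and Nature are mutually exclusive. Precisely: there do not exist a type X; surjective functions A : X → 𝓕 and B : X → 𝓕 (where 𝓕 is the set of all frames in ℝ³); functions F, G : X → T; a type X_Z and functions Z : X → X_Z, F̂ : 𝓕 × X_Z → T, Ĝ : 𝓕 × X_Z → T satisfying: (Parameter Independence) F(x) = F̂(A(x), Z(x)) and G(x) = Ĝ(B(x), Z(x)) for all x ∈ X; (Freedom) the function x ↦ (A(x), B(x), Z(x)) is surjective onto 𝓕 × 𝓕 × X_Z; and (Nature) for all frames 𝐚, 𝐛 ∈ 𝓕 and all z ∈ X_Z, if aᵢ = ±bⱼ for some indices i, j, then F̂ᵢ(𝐚, z) = Ĝⱼ(𝐛, z). -/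
noncomputable section


namespace CK
open RealInnerProductSpace

def vec (a b c : ℝ) : V3 := (WithLp.equiv 2 (Fin 3 → ℝ)).symm ![a,b,c]

lemma inner_vec (a b c d e f : ℝ) : ⟪vec a b c, vec d e f⟫ = a*d+b*e+c*f := by
  simp [vec, PiLp.inner_apply, Fin.sum_univ_three]
  ring

lemma orthonormal3 (u v w : V3) (h1 : ⟪u,u⟫ = 1) (h2 : ⟪v,v⟫ = 1) (h3 : ⟪w,w⟫ = 1)
    (h4 : ⟪u,v⟫ = 0) (h5 : ⟪u,w⟫ = 0) (h6 : ⟪v,w⟫ = 0) : Orthonormal ℝ ![u,v,w] := by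
  rw [orthonormal_iff_ite]
  intro i j
  fin_cases i <;> fin_cases j <;>
    simp_all [real_inner_comm u v, real_inner_comm u w, real_inner_comm v w]

lemma s2 : Real.sqrt 2 * Real.sqrt 2 = 2 := Real.mul_self_sqrt (by norm_num)
lemma s1' : Real.sqrt 1 * Real.sqrt 1 = 1 := Real.mul_self_sqrt (by norm_num)
lemma s3' : Real.sqrt 3 * Real.sqrt 3 = 3 := Real.mul_self_sqrt (by norm_num)
lemma s4' : Real.sqrt 4 * Real.sqrt 4 = 4 := Real.mul_self_sqrt (by norm_num)
lemma s12' : Real.sqrt 12 * Real.sqrt 12 = 12 := Real.mul_self_sqrt (by norm_num)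
lemma ne1 : Real.sqrt 1 ≠ 0 := by positivity
lemma ne2 : Real.sqrt 2 ≠ 0 := by positivity
lemma ne3 : Real.sqrt 3 ≠ 0 := by positivity
lemma ne4 : Real.sqrt 4 ≠ 0 := by positivity
lemma ne12 : Real.sqrt 12 ≠ 0 := by positivity

def u0 : V3 := (Real.sqrt 1)⁻¹ • vec (0:ℝ) (0:ℝ) (1:ℝ)
def u1 : V3 := (Real.sqrt 3)⁻¹ • vec (0:ℝ) (Real.sqrt 2) (-1:ℝ)
def u2 : V3 := (Real.sqrt 3)⁻¹ • vec (0:ℝ) (Real.sqrt 2) (1:ℝ)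
def u3 : V3 := (Real.sqrt 2)⁻¹ • vec (0:ℝ) (1:ℝ) (-1:ℝ)
def u4 : V3 := (Real.sqrt 3)⁻¹ • vec (0:ℝ) (1:ℝ) ((-1:ℝ)*(Real.sqrt 2))
def u5 : V3 := (Real.sqrt 1)⁻¹ • vec (0:ℝ) (1:ℝ) (0:ℝ)
def u6 : V3 := (Real.sqrt 3)⁻¹ • vec (0:ℝ) (1:ℝ) (Real.sqrt 2)
def u7 : V3 := (Real.sqrt 2)⁻¹ • vec (0:ℝ) (1:ℝ) (1:ℝ)
def u8 : V3 := (Real.sqrt 4)⁻¹ • vec (Real.sqrt 2) (-1:ℝ) (-1:ℝ)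
def u9 : V3 := (Real.sqrt 3)⁻¹ • vec (Real.sqrt 2) (-1:ℝ) (0:ℝ)
def u10 : V3 := (Real.sqrt 4)⁻¹ • vec (Real.sqrt 2) (-1:ℝ) (1:ℝ)
def u11 : V3 := (Real.sqrt 3)⁻¹ • vec (Real.sqrt 2) (0:ℝ) (-1:ℝ)
def u12 : V3 := (Real.sqrt 3)⁻¹ • vec (Real.sqrt 2) (0:ℝ) (1:ℝ)
def u13 : V3 := (Real.sqrt 4)⁻¹ • vec (Real.sqrt 2) (1:ℝ) (-1:ℝ)
def u14 : V3 := (Real.sqrt 3)⁻¹ • vec (Real.sqrt 2) (1:ℝ) (0:ℝ)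
def u15 : V3 := (Real.sqrt 4)⁻¹ • vec (Real.sqrt 2) (1:ℝ) (1:ℝ)
def u16 : V3 := (Real.sqrt 4)⁻¹ • vec (1:ℝ) (-1:ℝ) ((-1:ℝ)*(Real.sqrt 2))
def u17 : V3 := (Real.sqrt 2)⁻¹ • vec (1:ℝ) (-1:ℝ) (0:ℝ)
def u18 : V3 := (Real.sqrt 4)⁻¹ • vec (1:ℝ) (-1:ℝ) (Real.sqrt 2)
def u19 : V3 := (Real.sqrt 4)⁻¹ • vec (1:ℝ) ((-1:ℝ)*(Real.sqrt 2)) (-1:ℝ)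
def u20 : V3 := (Real.sqrt 3)⁻¹ • vec (1:ℝ) ((-1:ℝ)*(Real.sqrt 2)) (0:ℝ)
def u21 : V3 := (Real.sqrt 4)⁻¹ • vec (1:ℝ) ((-1:ℝ)*(Real.sqrt 2)) (1:ℝ)
def u22 : V3 := (Real.sqrt 2)⁻¹ • vec (1:ℝ) (0:ℝ) (-1:ℝ)
def u23 : V3 := (Real.sqrt 3)⁻¹ • vec (1:ℝ) (0:ℝ) ((-1:ℝ)*(Real.sqrt 2))
def u24 : V3 := (Real.sqrt 1)⁻¹ • vec (1:ℝ) (0:ℝ) (0:ℝ)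
def u25 : V3 := (Real.sqrt 3)⁻¹ • vec (1:ℝ) (0:ℝ) (Real.sqrt 2)
def u26 : V3 := (Real.sqrt 2)⁻¹ • vec (1:ℝ) (0:ℝ) (1:ℝ)
def u27 : V3 := (Real.sqrt 4)⁻¹ • vec (1:ℝ) (Real.sqrt 2) (-1:ℝ)
def u28 : V3 := (Real.sqrt 3)⁻¹ • vec (1:ℝ) (Real.sqrt 2) (0:ℝ)
def u29 : V3 := (Real.sqrt 4)⁻¹ • vec (1:ℝ) (Real.sqrt 2) (1:ℝ)
def u30 : V3 := (Real.sqrt 4)⁻¹ • vec (1:ℝ) (1:ℝ) ((-1:ℝ)*(Real.sqrt 2))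
def u31 : V3 := (Real.sqrt 2)⁻¹ • vec (1:ℝ) (1:ℝ) (0:ℝ)
def u32 : V3 := (Real.sqrt 4)⁻¹ • vec (1:ℝ) (1:ℝ) (Real.sqrt 2)
def w0 : V3 := (Real.sqrt 12)⁻¹ • vec (-3:ℝ) (-1:ℝ) ((-1:ℝ)*(Real.sqrt 2))
def w1 : V3 := (Real.sqrt 12)⁻¹ • vec (3:ℝ) (-1:ℝ) ((-1:ℝ)*(Real.sqrt 2))
def w2 : V3 := (Real.sqrt 12)⁻¹ • vec (3:ℝ) (1:ℝ) ((-1:ℝ)*(Real.sqrt 2))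
def w3 : V3 := (Real.sqrt 12)⁻¹ • vec (-3:ℝ) (1:ℝ) ((-1:ℝ)*(Real.sqrt 2))
def w4 : V3 := (Real.sqrt 12)⁻¹ • vec (-3:ℝ) ((-1:ℝ)*(Real.sqrt 2)) (-1:ℝ)
def w5 : V3 := (Real.sqrt 12)⁻¹ • vec (3:ℝ) ((-1:ℝ)*(Real.sqrt 2)) (-1:ℝ)
def w6 : V3 := (Real.sqrt 12)⁻¹ • vec (3:ℝ) (Real.sqrt 2) (-1:ℝ)
def w7 : V3 := (Real.sqrt 12)⁻¹ • vec (-3:ℝ) (Real.sqrt 2) (-1:ℝ)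
def w8 : V3 := (Real.sqrt 12)⁻¹ • vec ((-1:ℝ)*(Real.sqrt 2)) (-3:ℝ) (1:ℝ)
def w9 : V3 := (Real.sqrt 12)⁻¹ • vec (Real.sqrt 2) (-1:ℝ) (3:ℝ)
def w10 : V3 := (Real.sqrt 12)⁻¹ • vec (1:ℝ) (Real.sqrt 2) (3:ℝ)
def w11 : V3 := (Real.sqrt 12)⁻¹ • vec (-1:ℝ) ((-1:ℝ)*(Real.sqrt 2)) (3:ℝ)
def w12 : V3 := (Real.sqrt 12)⁻¹ • vec (Real.sqrt 2) (3:ℝ) (1:ℝ)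
def w13 : V3 := (Real.sqrt 12)⁻¹ • vec ((-1:ℝ)*(Real.sqrt 2)) (1:ℝ) (3:ℝ)
def w14 : V3 := (Real.sqrt 12)⁻¹ • vec (-1:ℝ) (-3:ℝ) ((-1:ℝ)*(Real.sqrt 2))
def w15 : V3 := (Real.sqrt 12)⁻¹ • vec (1:ℝ) (-3:ℝ) (Real.sqrt 2)
def w16 : V3 := (Real.sqrt 12)⁻¹ • vec (1:ℝ) (3:ℝ) ((-1:ℝ)*(Real.sqrt 2))
def w17 : V3 := (Real.sqrt 12)⁻¹ • vec (-1:ℝ) (3:ℝ) (Real.sqrt 2)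
def w18 : V3 := (Real.sqrt 12)⁻¹ • vec ((-1:ℝ)*(Real.sqrt 2)) (-1:ℝ) (-3:ℝ)
def w19 : V3 := (Real.sqrt 12)⁻¹ • vec (Real.sqrt 2) (-3:ℝ) (-1:ℝ)
def w20 : V3 := (Real.sqrt 12)⁻¹ • vec (-1:ℝ) (Real.sqrt 2) (-3:ℝ)
def w21 : V3 := (Real.sqrt 12)⁻¹ • vec (1:ℝ) ((-1:ℝ)*(Real.sqrt 2)) (-3:ℝ)
def w22 : V3 := (Real.sqrt 12)⁻¹ • vec (Real.sqrt 2) (1:ℝ) (-3:ℝ)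
def w23 : V3 := (Real.sqrt 12)⁻¹ • vec ((-1:ℝ)*(Real.sqrt 2)) (3:ℝ) (-1:ℝ)

lemma unit_of (m : ℝ) (a b c : ℝ) (hm : Real.sqrt m * Real.sqrt m = m) (h0 : Real.sqrt m ≠ 0)
    (h : a*a+b*b+c*c = m) : ⟪(Real.sqrt m)⁻¹ • vec a b c, (Real.sqrt m)⁻¹ • vec a b c⟫ = 1 := by
  rw [real_inner_smul_left, real_inner_smul_right, inner_vec]
  field_simp
  nlinarith [hm, h]

lemma perp_of (m k : ℝ) (a b c d e f : ℝ)
    (h : a*d+b*e+c*f = 0) : ⟪(Real.sqrt m)⁻¹ • vec a b c, (Real.sqrt k)⁻¹ • vec d e f⟫ = 0 := by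
  rw [real_inner_smul_left, real_inner_smul_right, inner_vec, h, mul_zero, mul_zero]

lemma unit_u0 : ⟪u0,u0⟫ = 1 := unit_of 1 _ _ _ s1' ne1 (by nlinarith [s2])
lemma unit_u1 : ⟪u1,u1⟫ = 1 := unit_of 3 _ _ _ s3' ne3 (by nlinarith [s2])
lemma unit_u2 : ⟪u2,u2⟫ = 1 := unit_of 3 _ _ _ s3' ne3 (by nlinarith [s2])
lemma unit_u3 : ⟪u3,u3⟫ = 1 := unit_of 2 _ _ _ s2 ne2 (by nlinarith [s2])
lemma unit_u4 : ⟪u4,u4⟫ = 1 := unit_of 3 _ _ _ s3' ne3 (by nlinarith [s2])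
lemma unit_u5 : ⟪u5,u5⟫ = 1 := unit_of 1 _ _ _ s1' ne1 (by nlinarith [s2])
lemma unit_u6 : ⟪u6,u6⟫ = 1 := unit_of 3 _ _ _ s3' ne3 (by nlinarith [s2])
lemma unit_u7 : ⟪u7,u7⟫ = 1 := unit_of 2 _ _ _ s2 ne2 (by nlinarith [s2])
lemma unit_u8 : ⟪u8,u8⟫ = 1 := unit_of 4 _ _ _ s4' ne4 (by nlinarith [s2])
lemma unit_u9 : ⟪u9,u9⟫ = 1 := unit_of 3 _ _ _ s3' ne3 (by nlinarith [s2])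
lemma unit_u10 : ⟪u10,u10⟫ = 1 := unit_of 4 _ _ _ s4' ne4 (by nlinarith [s2])
lemma unit_u11 : ⟪u11,u11⟫ = 1 := unit_of 3 _ _ _ s3' ne3 (by nlinarith [s2])
lemma unit_u12 : ⟪u12,u12⟫ = 1 := unit_of 3 _ _ _ s3' ne3 (by nlinarith [s2])
lemma unit_u13 : ⟪u13,u13⟫ = 1 := unit_of 4 _ _ _ s4' ne4 (by nlinarith [s2])
lemma unit_u14 : ⟪u14,u14⟫ = 1 := unit_of 3 _ _ _ s3' ne3 (by nlinarith [s2])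
lemma unit_u15 : ⟪u15,u15⟫ = 1 := unit_of 4 _ _ _ s4' ne4 (by nlinarith [s2])
lemma unit_u16 : ⟪u16,u16⟫ = 1 := unit_of 4 _ _ _ s4' ne4 (by nlinarith [s2])
lemma unit_u17 : ⟪u17,u17⟫ = 1 := unit_of 2 _ _ _ s2 ne2 (by nlinarith [s2])
lemma unit_u18 : ⟪u18,u18⟫ = 1 := unit_of 4 _ _ _ s4' ne4 (by nlinarith [s2])
lemma unit_u19 : ⟪u19,u19⟫ = 1 := unit_of 4 _ _ _ s4' ne4 (by nlinarith [s2])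
lemma unit_u20 : ⟪u20,u20⟫ = 1 := unit_of 3 _ _ _ s3' ne3 (by nlinarith [s2])
lemma unit_u21 : ⟪u21,u21⟫ = 1 := unit_of 4 _ _ _ s4' ne4 (by nlinarith [s2])
lemma unit_u22 : ⟪u22,u22⟫ = 1 := unit_of 2 _ _ _ s2 ne2 (by nlinarith [s2])
lemma unit_u23 : ⟪u23,u23⟫ = 1 := unit_of 3 _ _ _ s3' ne3 (by nlinarith [s2])
lemma unit_u24 : ⟪u24,u24⟫ = 1 := unit_of 1 _ _ _ s1' ne1 (by nlinarith [s2])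
lemma unit_u25 : ⟪u25,u25⟫ = 1 := unit_of 3 _ _ _ s3' ne3 (by nlinarith [s2])
lemma unit_u26 : ⟪u26,u26⟫ = 1 := unit_of 2 _ _ _ s2 ne2 (by nlinarith [s2])
lemma unit_u27 : ⟪u27,u27⟫ = 1 := unit_of 4 _ _ _ s4' ne4 (by nlinarith [s2])
lemma unit_u28 : ⟪u28,u28⟫ = 1 := unit_of 3 _ _ _ s3' ne3 (by nlinarith [s2])
lemma unit_u29 : ⟪u29,u29⟫ = 1 := unit_of 4 _ _ _ s4' ne4 (by nlinarith [s2])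
lemma unit_u30 : ⟪u30,u30⟫ = 1 := unit_of 4 _ _ _ s4' ne4 (by nlinarith [s2])
lemma unit_u31 : ⟪u31,u31⟫ = 1 := unit_of 2 _ _ _ s2 ne2 (by nlinarith [s2])
lemma unit_u32 : ⟪u32,u32⟫ = 1 := unit_of 4 _ _ _ s4' ne4 (by nlinarith [s2])
lemma unit_w0 : ⟪w0,w0⟫ = 1 := unit_of 12 _ _ _ s12' ne12 (by nlinarith [s2])
lemma unit_w1 : ⟪w1,w1⟫ = 1 := unit_of 12 _ _ _ s12' ne12 (by nlinarith [s2])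
lemma unit_w2 : ⟪w2,w2⟫ = 1 := unit_of 12 _ _ _ s12' ne12 (by nlinarith [s2])
lemma unit_w3 : ⟪w3,w3⟫ = 1 := unit_of 12 _ _ _ s12' ne12 (by nlinarith [s2])
lemma unit_w4 : ⟪w4,w4⟫ = 1 := unit_of 12 _ _ _ s12' ne12 (by nlinarith [s2])
lemma unit_w5 : ⟪w5,w5⟫ = 1 := unit_of 12 _ _ _ s12' ne12 (by nlinarith [s2])
lemma unit_w6 : ⟪w6,w6⟫ = 1 := unit_of 12 _ _ _ s12' ne12 (by nlinarith [s2])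
lemma unit_w7 : ⟪w7,w7⟫ = 1 := unit_of 12 _ _ _ s12' ne12 (by nlinarith [s2])
lemma unit_w8 : ⟪w8,w8⟫ = 1 := unit_of 12 _ _ _ s12' ne12 (by nlinarith [s2])
lemma unit_w9 : ⟪w9,w9⟫ = 1 := unit_of 12 _ _ _ s12' ne12 (by nlinarith [s2])
lemma unit_w10 : ⟪w10,w10⟫ = 1 := unit_of 12 _ _ _ s12' ne12 (by nlinarith [s2])
lemma unit_w11 : ⟪w11,w11⟫ = 1 := unit_of 12 _ _ _ s12' ne12 (by nlinarith [s2])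
lemma unit_w12 : ⟪w12,w12⟫ = 1 := unit_of 12 _ _ _ s12' ne12 (by nlinarith [s2])
lemma unit_w13 : ⟪w13,w13⟫ = 1 := unit_of 12 _ _ _ s12' ne12 (by nlinarith [s2])
lemma unit_w14 : ⟪w14,w14⟫ = 1 := unit_of 12 _ _ _ s12' ne12 (by nlinarith [s2])
lemma unit_w15 : ⟪w15,w15⟫ = 1 := unit_of 12 _ _ _ s12' ne12 (by nlinarith [s2])
lemma unit_w16 : ⟪w16,w16⟫ = 1 := unit_of 12 _ _ _ s12' ne12 (by nlinarith [s2])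
lemma unit_w17 : ⟪w17,w17⟫ = 1 := unit_of 12 _ _ _ s12' ne12 (by nlinarith [s2])
lemma unit_w18 : ⟪w18,w18⟫ = 1 := unit_of 12 _ _ _ s12' ne12 (by nlinarith [s2])
lemma unit_w19 : ⟪w19,w19⟫ = 1 := unit_of 12 _ _ _ s12' ne12 (by nlinarith [s2])
lemma unit_w20 : ⟪w20,w20⟫ = 1 := unit_of 12 _ _ _ s12' ne12 (by nlinarith [s2])
lemma unit_w21 : ⟪w21,w21⟫ = 1 := unit_of 12 _ _ _ s12' ne12 (by nlinarith [s2])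
lemma unit_w22 : ⟪w22,w22⟫ = 1 := unit_of 12 _ _ _ s12' ne12 (by nlinarith [s2])
lemma unit_w23 : ⟪w23,w23⟫ = 1 := unit_of 12 _ _ _ s12' ne12 (by nlinarith [s2])

def A0 : Frame := ⟨![u3,u7,u24], orthonormal3 _ _ _ unit_u3 unit_u7 unit_u24
  (perp_of _ _ _ _ _ _ _ _ (by nlinarith [s2]))
  (perp_of _ _ _ _ _ _ _ _ (by nlinarith [s2]))
  (perp_of _ _ _ _ _ _ _ _ (by nlinarith [s2]))
  ⟩
def A1 : Frame := ⟨![u21,u22,u29], orthonormal3 _ _ _ unit_u21 unit_u22 unit_u29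
  (perp_of _ _ _ _ _ _ _ _ (by nlinarith [s2]))
  (perp_of _ _ _ _ _ _ _ _ (by nlinarith [s2]))
  (perp_of _ _ _ _ _ _ _ _ (by nlinarith [s2]))
  ⟩
def A2 : Frame := ⟨![u0,u5,u24], orthonormal3 _ _ _ unit_u0 unit_u5 unit_u24
  (perp_of _ _ _ _ _ _ _ _ (by nlinarith [s2]))
  (perp_of _ _ _ _ _ _ _ _ (by nlinarith [s2]))
  (perp_of _ _ _ _ _ _ _ _ (by nlinarith [s2]))
  ⟩
def A3 : Frame := ⟨![u1,u6,u24], orthonormal3 _ _ _ unit_u1 unit_u6 unit_u24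
  (perp_of _ _ _ _ _ _ _ _ (by nlinarith [s2]))
  (perp_of _ _ _ _ _ _ _ _ (by nlinarith [s2]))
  (perp_of _ _ _ _ _ _ _ _ (by nlinarith [s2]))
  ⟩
def A4 : Frame := ⟨![u0,u14,u20], orthonormal3 _ _ _ unit_u0 unit_u14 unit_u20
  (perp_of _ _ _ _ _ _ _ _ (by nlinarith [s2]))
  (perp_of _ _ _ _ _ _ _ _ (by nlinarith [s2]))
  (perp_of _ _ _ _ _ _ _ _ (by nlinarith [s2]))
  ⟩
def A5 : Frame := ⟨![u5,u22,u26], orthonormal3 _ _ _ unit_u5 unit_u22 unit_u26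
  (perp_of _ _ _ _ _ _ _ _ (by nlinarith [s2]))
  (perp_of _ _ _ _ _ _ _ _ (by nlinarith [s2]))
  (perp_of _ _ _ _ _ _ _ _ (by nlinarith [s2]))
  ⟩
def A6 : Frame := ⟨![u17,u30,u32], orthonormal3 _ _ _ unit_u17 unit_u30 unit_u32
  (perp_of _ _ _ _ _ _ _ _ (by nlinarith [s2]))
  (perp_of _ _ _ _ _ _ _ _ (by nlinarith [s2]))
  (perp_of _ _ _ _ _ _ _ _ (by nlinarith [s2]))
  ⟩
def A7 : Frame := ⟨![u0,u17,u31], orthonormal3 _ _ _ unit_u0 unit_u17 unit_u31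
  (perp_of _ _ _ _ _ _ _ _ (by nlinarith [s2]))
  (perp_of _ _ _ _ _ _ _ _ (by nlinarith [s2]))
  (perp_of _ _ _ _ _ _ _ _ (by nlinarith [s2]))
  ⟩
def A8 : Frame := ⟨![u7,u10,u13], orthonormal3 _ _ _ unit_u7 unit_u10 unit_u13
  (perp_of _ _ _ _ _ _ _ _ (by nlinarith [s2]))
  (perp_of _ _ _ _ _ _ _ _ (by nlinarith [s2]))
  (perp_of _ _ _ _ _ _ _ _ (by nlinarith [s2]))
  ⟩
def A9 : Frame := ⟨![u5,u12,u23], orthonormal3 _ _ _ unit_u5 unit_u12 unit_u23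
  (perp_of _ _ _ _ _ _ _ _ (by nlinarith [s2]))
  (perp_of _ _ _ _ _ _ _ _ (by nlinarith [s2]))
  (perp_of _ _ _ _ _ _ _ _ (by nlinarith [s2]))
  ⟩
def A10 : Frame := ⟨![u2,u4,u24], orthonormal3 _ _ _ unit_u2 unit_u4 unit_u24
  (perp_of _ _ _ _ _ _ _ _ (by nlinarith [s2]))
  (perp_of _ _ _ _ _ _ _ _ (by nlinarith [s2]))
  (perp_of _ _ _ _ _ _ _ _ (by nlinarith [s2]))
  ⟩
def A11 : Frame := ⟨![u19,u26,u27], orthonormal3 _ _ _ unit_u19 unit_u26 unit_u27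
  (perp_of _ _ _ _ _ _ _ _ (by nlinarith [s2]))
  (perp_of _ _ _ _ _ _ _ _ (by nlinarith [s2]))
  (perp_of _ _ _ _ _ _ _ _ (by nlinarith [s2]))
  ⟩
def A12 : Frame := ⟨![u16,u18,u31], orthonormal3 _ _ _ unit_u16 unit_u18 unit_u31
  (perp_of _ _ _ _ _ _ _ _ (by nlinarith [s2]))
  (perp_of _ _ _ _ _ _ _ _ (by nlinarith [s2]))
  (perp_of _ _ _ _ _ _ _ _ (by nlinarith [s2]))
  ⟩
def A13 : Frame := ⟨![u3,u8,u15], orthonormal3 _ _ _ unit_u3 unit_u8 unit_u15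
  (perp_of _ _ _ _ _ _ _ _ (by nlinarith [s2]))
  (perp_of _ _ _ _ _ _ _ _ (by nlinarith [s2]))
  (perp_of _ _ _ _ _ _ _ _ (by nlinarith [s2]))
  ⟩
def A14 : Frame := ⟨![u5,u11,u25], orthonormal3 _ _ _ unit_u5 unit_u11 unit_u25
  (perp_of _ _ _ _ _ _ _ _ (by nlinarith [s2]))
  (perp_of _ _ _ _ _ _ _ _ (by nlinarith [s2]))
  (perp_of _ _ _ _ _ _ _ _ (by nlinarith [s2]))
  ⟩
def A15 : Frame := ⟨![u0,u9,u28], orthonormal3 _ _ _ unit_u0 unit_u9 unit_u28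
  (perp_of _ _ _ _ _ _ _ _ (by nlinarith [s2]))
  (perp_of _ _ _ _ _ _ _ _ (by nlinarith [s2]))
  (perp_of _ _ _ _ _ _ _ _ (by nlinarith [s2]))
  ⟩
def P0 : Frame := ⟨![u1,u16,w0], orthonormal3 _ _ _ unit_u1 unit_u16 unit_w0
  (perp_of _ _ _ _ _ _ _ _ (by nlinarith [s2]))
  (perp_of _ _ _ _ _ _ _ _ (by nlinarith [s2]))
  (perp_of _ _ _ _ _ _ _ _ (by nlinarith [s2]))
  ⟩
def P1 : Frame := ⟨![u1,u32,w1], orthonormal3 _ _ _ unit_u1 unit_u32 unit_w1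
  (perp_of _ _ _ _ _ _ _ _ (by nlinarith [s2]))
  (perp_of _ _ _ _ _ _ _ _ (by nlinarith [s2]))
  (perp_of _ _ _ _ _ _ _ _ (by nlinarith [s2]))
  ⟩
def P2 : Frame := ⟨![u2,u18,w2], orthonormal3 _ _ _ unit_u2 unit_u18 unit_w2
  (perp_of _ _ _ _ _ _ _ _ (by nlinarith [s2]))
  (perp_of _ _ _ _ _ _ _ _ (by nlinarith [s2]))
  (perp_of _ _ _ _ _ _ _ _ (by nlinarith [s2]))
  ⟩
def P3 : Frame := ⟨![u2,u30,w3], orthonormal3 _ _ _ unit_u2 unit_u30 unit_w3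
  (perp_of _ _ _ _ _ _ _ _ (by nlinarith [s2]))
  (perp_of _ _ _ _ _ _ _ _ (by nlinarith [s2]))
  (perp_of _ _ _ _ _ _ _ _ (by nlinarith [s2]))
  ⟩
def P4 : Frame := ⟨![u4,u19,w4], orthonormal3 _ _ _ unit_u4 unit_u19 unit_w4
  (perp_of _ _ _ _ _ _ _ _ (by nlinarith [s2]))
  (perp_of _ _ _ _ _ _ _ _ (by nlinarith [s2]))
  (perp_of _ _ _ _ _ _ _ _ (by nlinarith [s2]))
  ⟩
def P5 : Frame := ⟨![u4,u29,w5], orthonormal3 _ _ _ unit_u4 unit_u29 unit_w5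
  (perp_of _ _ _ _ _ _ _ _ (by nlinarith [s2]))
  (perp_of _ _ _ _ _ _ _ _ (by nlinarith [s2]))
  (perp_of _ _ _ _ _ _ _ _ (by nlinarith [s2]))
  ⟩
def P6 : Frame := ⟨![u6,u21,w6], orthonormal3 _ _ _ unit_u6 unit_u21 unit_w6
  (perp_of _ _ _ _ _ _ _ _ (by nlinarith [s2]))
  (perp_of _ _ _ _ _ _ _ _ (by nlinarith [s2]))
  (perp_of _ _ _ _ _ _ _ _ (by nlinarith [s2]))
  ⟩
def P7 : Frame := ⟨![u6,u27,w7], orthonormal3 _ _ _ unit_u6 unit_u27 unit_w7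
  (perp_of _ _ _ _ _ _ _ _ (by nlinarith [s2]))
  (perp_of _ _ _ _ _ _ _ _ (by nlinarith [s2]))
  (perp_of _ _ _ _ _ _ _ _ (by nlinarith [s2]))
  ⟩
def P8 : Frame := ⟨![u8,u25,w8], orthonormal3 _ _ _ unit_u8 unit_u25 unit_w8
  (perp_of _ _ _ _ _ _ _ _ (by nlinarith [s2]))
  (perp_of _ _ _ _ _ _ _ _ (by nlinarith [s2]))
  (perp_of _ _ _ _ _ _ _ _ (by nlinarith [s2]))
  ⟩
def P9 : Frame := ⟨![u8,u28,w9], orthonormal3 _ _ _ unit_u8 unit_u28 unit_w9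
  (perp_of _ _ _ _ _ _ _ _ (by nlinarith [s2]))
  (perp_of _ _ _ _ _ _ _ _ (by nlinarith [s2]))
  (perp_of _ _ _ _ _ _ _ _ (by nlinarith [s2]))
  ⟩
def P10 : Frame := ⟨![u9,u27,w10], orthonormal3 _ _ _ unit_u9 unit_u27 unit_w10
  (perp_of _ _ _ _ _ _ _ _ (by nlinarith [s2]))
  (perp_of _ _ _ _ _ _ _ _ (by nlinarith [s2]))
  (perp_of _ _ _ _ _ _ _ _ (by nlinarith [s2]))
  ⟩
def P11 : Frame := ⟨![u9,u29,w11], orthonormal3 _ _ _ unit_u9 unit_u29 unit_w11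
  (perp_of _ _ _ _ _ _ _ _ (by nlinarith [s2]))
  (perp_of _ _ _ _ _ _ _ _ (by nlinarith [s2]))
  (perp_of _ _ _ _ _ _ _ _ (by nlinarith [s2]))
  ⟩
def P12 : Frame := ⟨![u10,u23,w12], orthonormal3 _ _ _ unit_u10 unit_u23 unit_w12
  (perp_of _ _ _ _ _ _ _ _ (by nlinarith [s2]))
  (perp_of _ _ _ _ _ _ _ _ (by nlinarith [s2]))
  (perp_of _ _ _ _ _ _ _ _ (by nlinarith [s2]))
  ⟩
def P13 : Frame := ⟨![u10,u28,w13], orthonormal3 _ _ _ unit_u10 unit_u28 unit_w13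
  (perp_of _ _ _ _ _ _ _ _ (by nlinarith [s2]))
  (perp_of _ _ _ _ _ _ _ _ (by nlinarith [s2]))
  (perp_of _ _ _ _ _ _ _ _ (by nlinarith [s2]))
  ⟩
def P14 : Frame := ⟨![u11,u18,w14], orthonormal3 _ _ _ unit_u11 unit_u18 unit_w14
  (perp_of _ _ _ _ _ _ _ _ (by nlinarith [s2]))
  (perp_of _ _ _ _ _ _ _ _ (by nlinarith [s2]))
  (perp_of _ _ _ _ _ _ _ _ (by nlinarith [s2]))
  ⟩
def P15 : Frame := ⟨![u11,u32,w15], orthonormal3 _ _ _ unit_u11 unit_u32 unit_w15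
  (perp_of _ _ _ _ _ _ _ _ (by nlinarith [s2]))
  (perp_of _ _ _ _ _ _ _ _ (by nlinarith [s2]))
  (perp_of _ _ _ _ _ _ _ _ (by nlinarith [s2]))
  ⟩
def P16 : Frame := ⟨![u12,u16,w16], orthonormal3 _ _ _ unit_u12 unit_u16 unit_w16
  (perp_of _ _ _ _ _ _ _ _ (by nlinarith [s2]))
  (perp_of _ _ _ _ _ _ _ _ (by nlinarith [s2]))
  (perp_of _ _ _ _ _ _ _ _ (by nlinarith [s2]))
  ⟩
def P17 : Frame := ⟨![u12,u30,w17], orthonormal3 _ _ _ unit_u12 unit_u30 unit_w17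
  (perp_of _ _ _ _ _ _ _ _ (by nlinarith [s2]))
  (perp_of _ _ _ _ _ _ _ _ (by nlinarith [s2]))
  (perp_of _ _ _ _ _ _ _ _ (by nlinarith [s2]))
  ⟩
def P18 : Frame := ⟨![u13,u20,w18], orthonormal3 _ _ _ unit_u13 unit_u20 unit_w18
  (perp_of _ _ _ _ _ _ _ _ (by nlinarith [s2]))
  (perp_of _ _ _ _ _ _ _ _ (by nlinarith [s2]))
  (perp_of _ _ _ _ _ _ _ _ (by nlinarith [s2]))
  ⟩
def P19 : Frame := ⟨![u13,u25,w19], orthonormal3 _ _ _ unit_u13 unit_u25 unit_w19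
  (perp_of _ _ _ _ _ _ _ _ (by nlinarith [s2]))
  (perp_of _ _ _ _ _ _ _ _ (by nlinarith [s2]))
  (perp_of _ _ _ _ _ _ _ _ (by nlinarith [s2]))
  ⟩
def P20 : Frame := ⟨![u14,u19,w20], orthonormal3 _ _ _ unit_u14 unit_u19 unit_w20
  (perp_of _ _ _ _ _ _ _ _ (by nlinarith [s2]))
  (perp_of _ _ _ _ _ _ _ _ (by nlinarith [s2]))
  (perp_of _ _ _ _ _ _ _ _ (by nlinarith [s2]))
  ⟩
def P21 : Frame := ⟨![u14,u21,w21], orthonormal3 _ _ _ unit_u14 unit_u21 unit_w21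
  (perp_of _ _ _ _ _ _ _ _ (by nlinarith [s2]))
  (perp_of _ _ _ _ _ _ _ _ (by nlinarith [s2]))
  (perp_of _ _ _ _ _ _ _ _ (by nlinarith [s2]))
  ⟩
def P22 : Frame := ⟨![u15,u20,w22], orthonormal3 _ _ _ unit_u15 unit_u20 unit_w22
  (perp_of _ _ _ _ _ _ _ _ (by nlinarith [s2]))
  (perp_of _ _ _ _ _ _ _ _ (by nlinarith [s2]))
  (perp_of _ _ _ _ _ _ _ _ (by nlinarith [s2]))
  ⟩
def P23 : Frame := ⟨![u15,u23,w23], orthonormal3 _ _ _ unit_u15 unit_u23 unit_w23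
  (perp_of _ _ _ _ _ _ _ _ (by nlinarith [s2]))
  (perp_of _ _ _ _ _ _ _ _ (by nlinarith [s2]))
  (perp_of _ _ _ _ _ _ _ _ (by nlinarith [s2]))
  ⟩

end CK

namespace CK
lemma c_A0_0 : (A0).1 0 = u3 := rfl
lemma c_A0_1 : (A0).1 1 = u7 := rfl
lemma c_A0_2 : (A0).1 2 = u24 := rfl
lemma c_A1_0 : (A1).1 0 = u21 := rfl
lemma c_A1_1 : (A1).1 1 = u22 := rfl
lemma c_A1_2 : (A1).1 2 = u29 := rfl
lemma c_A10_0 : (A10).1 0 = u2 := rfl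
lemma c_A10_1 : (A10).1 1 = u4 := rfl
lemma c_A10_2 : (A10).1 2 = u24 := rfl
lemma c_A11_0 : (A11).1 0 = u19 := rfl
lemma c_A11_1 : (A11).1 1 = u26 := rfl
lemma c_A11_2 : (A11).1 2 = u27 := rfl
lemma c_A12_0 : (A12).1 0 = u16 := rfl
lemma c_A12_1 : (A12).1 1 = u18 := rfl
lemma c_A12_2 : (A12).1 2 = u31 := rfl
lemma c_A13_0 : (A13).1 0 = u3 := rfl
lemma c_A13_1 : (A13).1 1 = u8 := rfl
lemma c_A13_2 : (A13).1 2 = u15 := rfl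
lemma c_A14_0 : (A14).1 0 = u5 := rfl
lemma c_A14_1 : (A14).1 1 = u11 := rfl
lemma c_A14_2 : (A14).1 2 = u25 := rfl
lemma c_A15_0 : (A15).1 0 = u0 := rfl
lemma c_A15_1 : (A15).1 1 = u9 := rfl
lemma c_A15_2 : (A15).1 2 = u28 := rfl
lemma c_A2_0 : (A2).1 0 = u0 := rfl
lemma c_A2_1 : (A2).1 1 = u5 := rfl
lemma c_A2_2 : (A2).1 2 = u24 := rfl
lemma c_A3_0 : (A3).1 0 = u1 := rfl
lemma c_A3_1 : (A3).1 1 = u6 := rfl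
lemma c_A3_2 : (A3).1 2 = u24 := rfl
lemma c_A4_0 : (A4).1 0 = u0 := rfl
lemma c_A4_1 : (A4).1 1 = u14 := rfl
lemma c_A4_2 : (A4).1 2 = u20 := rfl
lemma c_A5_0 : (A5).1 0 = u5 := rfl
lemma c_A5_1 : (A5).1 1 = u22 := rfl
lemma c_A5_2 : (A5).1 2 = u26 := rfl
lemma c_A6_0 : (A6).1 0 = u17 := rfl
lemma c_A6_1 : (A6).1 1 = u30 := rfl
lemma c_A6_2 : (A6).1 2 = u32 := rfl
lemma c_A7_0 : (A7).1 0 = u0 := rfl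
lemma c_A7_1 : (A7).1 1 = u17 := rfl
lemma c_A7_2 : (A7).1 2 = u31 := rfl
lemma c_A8_0 : (A8).1 0 = u7 := rfl
lemma c_A8_1 : (A8).1 1 = u10 := rfl
lemma c_A8_2 : (A8).1 2 = u13 := rfl
lemma c_A9_0 : (A9).1 0 = u5 := rfl
lemma c_A9_1 : (A9).1 1 = u12 := rfl
lemma c_A9_2 : (A9).1 2 = u23 := rfl
lemma c_P0_0 : (P0).1 0 = u1 := rfl
lemma c_P0_1 : (P0).1 1 = u16 := rfl
lemma c_P1_0 : (P1).1 0 = u1 := rfl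
lemma c_P1_1 : (P1).1 1 = u32 := rfl
lemma c_P10_0 : (P10).1 0 = u9 := rfl
lemma c_P10_1 : (P10).1 1 = u27 := rfl
lemma c_P11_0 : (P11).1 0 = u9 := rfl
lemma c_P11_1 : (P11).1 1 = u29 := rfl
lemma c_P12_0 : (P12).1 0 = u10 := rfl
lemma c_P12_1 : (P12).1 1 = u23 := rfl
lemma c_P13_0 : (P13).1 0 = u10 := rfl
lemma c_P13_1 : (P13).1 1 = u28 := rfl
lemma c_P14_0 : (P14).1 0 = u11 := rfl
lemma c_P14_1 : (P14).1 1 = u18 := rfl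
lemma c_P15_0 : (P15).1 0 = u11 := rfl
lemma c_P15_1 : (P15).1 1 = u32 := rfl
lemma c_P16_0 : (P16).1 0 = u12 := rfl
lemma c_P16_1 : (P16).1 1 = u16 := rfl
lemma c_P17_0 : (P17).1 0 = u12 := rfl
lemma c_P17_1 : (P17).1 1 = u30 := rfl
lemma c_P18_0 : (P18).1 0 = u13 := rfl
lemma c_P18_1 : (P18).1 1 = u20 := rfl
lemma c_P19_0 : (P19).1 0 = u13 := rfl
lemma c_P19_1 : (P19).1 1 = u25 := rfl
lemma c_P2_0 : (P2).1 0 = u2 := rfl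
lemma c_P2_1 : (P2).1 1 = u18 := rfl
lemma c_P20_0 : (P20).1 0 = u14 := rfl
lemma c_P20_1 : (P20).1 1 = u19 := rfl
lemma c_P21_0 : (P21).1 0 = u14 := rfl
lemma c_P21_1 : (P21).1 1 = u21 := rfl
lemma c_P22_0 : (P22).1 0 = u15 := rfl
lemma c_P22_1 : (P22).1 1 = u20 := rfl
lemma c_P23_0 : (P23).1 0 = u15 := rfl
lemma c_P23_1 : (P23).1 1 = u23 := rfl
lemma c_P3_0 : (P3).1 0 = u2 := rfl
lemma c_P3_1 : (P3).1 1 = u30 := rfl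
lemma c_P4_0 : (P4).1 0 = u4 := rfl
lemma c_P4_1 : (P4).1 1 = u19 := rfl
lemma c_P5_0 : (P5).1 0 = u4 := rfl
lemma c_P5_1 : (P5).1 1 = u29 := rfl
lemma c_P6_0 : (P6).1 0 = u6 := rfl
lemma c_P6_1 : (P6).1 1 = u21 := rfl
lemma c_P7_0 : (P7).1 0 = u6 := rfl
lemma c_P7_1 : (P7).1 1 = u27 := rfl
lemma c_P8_0 : (P8).1 0 = u8 := rfl
lemma c_P8_1 : (P8).1 1 = u25 := rfl
lemma c_P9_0 : (P9).1 0 = u8 := rfl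
lemma c_P9_1 : (P9).1 1 = u28 := rfl
end CK

namespace CK
set_option maxHeartbeats 4000000

lemma pair_ge (a b c : ℕ) (h : a + b + c = 2 ∧ a ≤ 1 ∧ b ≤ 1 ∧ c ≤ 1) : 1 ≤ a + b := by omega

lemma ks_core (g0 g1 g2 g3 g4 g5 g6 g7 g8 g9 g10 g11 g12 g13 g14 g15 g16 g17 g18 g19 g20 g21 g22 g23 g24 g25 g26 g27 g28 g29 g30 g31 g32 : ℕ)
    (b0 : g0 ≤ 1)
    (b1 : g1 ≤ 1)
    (b2 : g2 ≤ 1)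
    (b3 : g3 ≤ 1)
    (b4 : g4 ≤ 1)
    (b5 : g5 ≤ 1)
    (b6 : g6 ≤ 1)
    (b7 : g7 ≤ 1)
    (b8 : g8 ≤ 1)
    (b9 : g9 ≤ 1)
    (b10 : g10 ≤ 1)
    (b11 : g11 ≤ 1)
    (b12 : g12 ≤ 1)
    (b13 : g13 ≤ 1)
    (b14 : g14 ≤ 1)
    (b15 : g15 ≤ 1)
    (b16 : g16 ≤ 1)
    (b17 : g17 ≤ 1)
    (b18 : g18 ≤ 1)
    (b19 : g19 ≤ 1)
    (b20 : g20 ≤ 1)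
    (b21 : g21 ≤ 1)
    (b22 : g22 ≤ 1)
    (b23 : g23 ≤ 1)
    (b24 : g24 ≤ 1)
    (b25 : g25 ≤ 1)
    (b26 : g26 ≤ 1)
    (b27 : g27 ≤ 1)
    (b28 : g28 ≤ 1)
    (b29 : g29 ≤ 1)
    (b30 : g30 ≤ 1)
    (b31 : g31 ≤ 1)
    (b32 : g32 ≤ 1)
    (t0 : g3 + g7 + g24 = 2)
    (t1 : g21 + g22 + g29 = 2)
    (t2 : g0 + g5 + g24 = 2)
    (t3 : g1 + g6 + g24 = 2)
    (t4 : g0 + g14 + g20 = 2)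
    (t5 : g5 + g22 + g26 = 2)
    (t6 : g17 + g30 + g32 = 2)
    (t7 : g0 + g17 + g31 = 2)
    (t8 : g7 + g10 + g13 = 2)
    (t9 : g5 + g12 + g23 = 2)
    (t10 : g2 + g4 + g24 = 2)
    (t11 : g19 + g26 + g27 = 2)
    (t12 : g16 + g18 + g31 = 2)
    (t13 : g3 + g8 + g15 = 2)
    (t14 : g5 + g11 + g25 = 2)
    (t15 : g0 + g9 + g28 = 2)
    (p0 : 1 ≤ g1 + g16)
    (p1 : 1 ≤ g1 + g32)
    (p2 : 1 ≤ g2 + g18)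
    (p3 : 1 ≤ g2 + g30)
    (p4 : 1 ≤ g4 + g19)
    (p5 : 1 ≤ g4 + g29)
    (p6 : 1 ≤ g6 + g21)
    (p7 : 1 ≤ g6 + g27)
    (p8 : 1 ≤ g8 + g25)
    (p9 : 1 ≤ g8 + g28)
    (p10 : 1 ≤ g9 + g27)
    (p11 : 1 ≤ g9 + g29)
    (p12 : 1 ≤ g10 + g23)
    (p13 : 1 ≤ g10 + g28)
    (p14 : 1 ≤ g11 + g18)
    (p15 : 1 ≤ g11 + g32)
    (p16 : 1 ≤ g12 + g16)
    (p17 : 1 ≤ g12 + g30)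
    (p18 : 1 ≤ g13 + g20)
    (p19 : 1 ≤ g13 + g25)
    (p20 : 1 ≤ g14 + g19)
    (p21 : 1 ≤ g14 + g21)
    (p22 : 1 ≤ g15 + g20)
    (p23 : 1 ≤ g15 + g23)
    : False := by
  rcases Nat.eq_zero_or_pos g0 with hq1|hq1
  · rcases Nat.eq_zero_or_pos g1 with hq2|hq2
    · omega
    · rcases Nat.eq_zero_or_pos g2 with hq3|hq3
      · omega
      · omega
  · rcases Nat.eq_zero_or_pos g5 with hq4|hq4
    · rcases Nat.eq_zero_or_pos g1 with hq5|hq5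
      · rcases Nat.eq_zero_or_pos g2 with hq6|hq6
        · omega
        · omega
      · omega
    · rcases Nat.eq_zero_or_pos g8 with hq7|hq7
      · rcases Nat.eq_zero_or_pos g10 with hq8|hq8
        · omega
        · omega
      · rcases Nat.eq_zero_or_pos g9 with hq9|hq9
        · omega
        · omega

end CK

open CK in
set_option maxHeartbeats 4000000 in
/-- The Conway–Kochen Theorem (Cator–Landsman formulation): Determinism, Parameter
Independence, Freedom, the Identification Principle and Nature are mutually exclusive. -/
theorem conway_kochen :
    ¬ ∃ (X : Type) (A : X → Frame) (B : X → Frame) (F : X → ↥Tset) (G : X → ↥Tset)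
        (XZ : Type) (Z : X → XZ) (Fh : Frame → XZ → ↥Tset) (Gh : Frame → XZ → ↥Tset),
      Function.Surjective A ∧ Function.Surjective B ∧
      (∀ x : X, F x = Fh (A x) (Z x)) ∧
      (∀ x : X, G x = Gh (B x) (Z x)) ∧
      Function.Surjective (fun x : X => (A x, B x, Z x)) ∧
      (∀ (a b : Frame) (z : XZ) (i j : Fin 3),
          SameLine (a.1 i) (b.1 j) → (Fh a z).1 i = (Gh b z).1 j) := by
  rintro ⟨X, A, B, F, G, XZ, Z, Fh, Gh, hA, hB, hF, hG, hfree, nature⟩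
  obtain ⟨x0, -⟩ := hA A0
  set z0 := Z x0 with hz0
  have line : ∀ (a b : Frame) (i j : Fin 3), a.1 i = b.1 j →
      (Fh a z0).1 i = (Fh b z0).1 j := by
    intro a b i j h
    have h1 := nature a b z0 i j (Or.inl h)
    have h2 := nature b b z0 j j (Or.inl rfl)
    rw [h1, h2]
  have tfacts : ∀ a : Frame, (Fh a z0).1 0 + (Fh a z0).1 1 + (Fh a z0).1 2 = 2 ∧
      (Fh a z0).1 0 ≤ 1 ∧ (Fh a z0).1 1 ≤ 1 ∧ (Fh a z0).1 2 ≤ 1 := by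
    intro a
    have h := (Fh a z0).2
    simp only [Tset, Set.mem_insert_iff, Set.mem_singleton_iff] at h
    rcases h with h|h|h <;> rw [h] <;> norm_num <;> decide
  have hA0 := tfacts A0
  have hA1 := tfacts A1
  have hA2 := tfacts A2
  rw [line A2 A0 2 2 (c_A2_2.trans c_A0_2.symm)] at hA2
  have hA3 := tfacts A3
  rw [line A3 A0 2 2 (c_A3_2.trans c_A0_2.symm)] at hA3
  have hA4 := tfacts A4
  rw [line A4 A2 0 0 (c_A4_0.trans c_A2_0.symm)] at hA4
  have hA5 := tfacts A5
  rw [line A5 A2 0 1 (c_A5_0.trans c_A2_1.symm), line A5 A1 1 1 (c_A5_1.trans c_A1_1.symm)] at hA5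
  have hA6 := tfacts A6
  have hA7 := tfacts A7
  rw [line A7 A2 0 0 (c_A7_0.trans c_A2_0.symm), line A7 A6 1 0 (c_A7_1.trans c_A6_0.symm)] at hA7
  have hA8 := tfacts A8
  rw [line A8 A0 0 1 (c_A8_0.trans c_A0_1.symm)] at hA8
  have hA9 := tfacts A9
  rw [line A9 A2 0 1 (c_A9_0.trans c_A2_1.symm)] at hA9
  have hA10 := tfacts A10
  rw [line A10 A0 2 2 (c_A10_2.trans c_A0_2.symm)] at hA10
  have hA11 := tfacts A11
  rw [line A11 A5 1 2 (c_A11_1.trans c_A5_2.symm)] at hA11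
  have hA12 := tfacts A12
  rw [line A12 A7 2 2 (c_A12_2.trans c_A7_2.symm)] at hA12
  have hA13 := tfacts A13
  rw [line A13 A0 0 0 (c_A13_0.trans c_A0_0.symm)] at hA13
  have hA14 := tfacts A14
  rw [line A14 A2 0 1 (c_A14_0.trans c_A2_1.symm)] at hA14
  have hA15 := tfacts A15
  rw [line A15 A2 0 0 (c_A15_0.trans c_A2_0.symm)] at hA15
  have hP0 := tfacts P0
  rw [line P0 A3 0 0 (c_P0_0.trans c_A3_0.symm), line P0 A12 1 0 (c_P0_1.trans c_A12_0.symm)] at hP0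
  have hP1 := tfacts P1
  rw [line P1 A3 0 0 (c_P1_0.trans c_A3_0.symm), line P1 A6 1 2 (c_P1_1.trans c_A6_2.symm)] at hP1
  have hP2 := tfacts P2
  rw [line P2 A10 0 0 (c_P2_0.trans c_A10_0.symm), line P2 A12 1 1 (c_P2_1.trans c_A12_1.symm)] at hP2
  have hP3 := tfacts P3
  rw [line P3 A10 0 0 (c_P3_0.trans c_A10_0.symm), line P3 A6 1 1 (c_P3_1.trans c_A6_1.symm)] at hP3
  have hP4 := tfacts P4
  rw [line P4 A10 0 1 (c_P4_0.trans c_A10_1.symm), line P4 A11 1 0 (c_P4_1.trans c_A11_0.symm)] at hP4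
  have hP5 := tfacts P5
  rw [line P5 A10 0 1 (c_P5_0.trans c_A10_1.symm), line P5 A1 1 2 (c_P5_1.trans c_A1_2.symm)] at hP5
  have hP6 := tfacts P6
  rw [line P6 A3 0 1 (c_P6_0.trans c_A3_1.symm), line P6 A1 1 0 (c_P6_1.trans c_A1_0.symm)] at hP6
  have hP7 := tfacts P7
  rw [line P7 A3 0 1 (c_P7_0.trans c_A3_1.symm), line P7 A11 1 2 (c_P7_1.trans c_A11_2.symm)] at hP7
  have hP8 := tfacts P8
  rw [line P8 A13 0 1 (c_P8_0.trans c_A13_1.symm), line P8 A14 1 2 (c_P8_1.trans c_A14_2.symm)] at hP8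
  have hP9 := tfacts P9
  rw [line P9 A13 0 1 (c_P9_0.trans c_A13_1.symm), line P9 A15 1 2 (c_P9_1.trans c_A15_2.symm)] at hP9
  have hP10 := tfacts P10
  rw [line P10 A15 0 1 (c_P10_0.trans c_A15_1.symm), line P10 A11 1 2 (c_P10_1.trans c_A11_2.symm)] at hP10
  have hP11 := tfacts P11
  rw [line P11 A15 0 1 (c_P11_0.trans c_A15_1.symm), line P11 A1 1 2 (c_P11_1.trans c_A1_2.symm)] at hP11
  have hP12 := tfacts P12
  rw [line P12 A8 0 1 (c_P12_0.trans c_A8_1.symm), line P12 A9 1 2 (c_P12_1.trans c_A9_2.symm)] at hP12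
  have hP13 := tfacts P13
  rw [line P13 A8 0 1 (c_P13_0.trans c_A8_1.symm), line P13 A15 1 2 (c_P13_1.trans c_A15_2.symm)] at hP13
  have hP14 := tfacts P14
  rw [line P14 A14 0 1 (c_P14_0.trans c_A14_1.symm), line P14 A12 1 1 (c_P14_1.trans c_A12_1.symm)] at hP14
  have hP15 := tfacts P15
  rw [line P15 A14 0 1 (c_P15_0.trans c_A14_1.symm), line P15 A6 1 2 (c_P15_1.trans c_A6_2.symm)] at hP15
  have hP16 := tfacts P16
  rw [line P16 A9 0 1 (c_P16_0.trans c_A9_1.symm), line P16 A12 1 0 (c_P16_1.trans c_A12_0.symm)] at hP16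
  have hP17 := tfacts P17
  rw [line P17 A9 0 1 (c_P17_0.trans c_A9_1.symm), line P17 A6 1 1 (c_P17_1.trans c_A6_1.symm)] at hP17
  have hP18 := tfacts P18
  rw [line P18 A8 0 2 (c_P18_0.trans c_A8_2.symm), line P18 A4 1 2 (c_P18_1.trans c_A4_2.symm)] at hP18
  have hP19 := tfacts P19
  rw [line P19 A8 0 2 (c_P19_0.trans c_A8_2.symm), line P19 A14 1 2 (c_P19_1.trans c_A14_2.symm)] at hP19
  have hP20 := tfacts P20
  rw [line P20 A4 0 1 (c_P20_0.trans c_A4_1.symm), line P20 A11 1 0 (c_P20_1.trans c_A11_0.symm)] at hP20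
  have hP21 := tfacts P21
  rw [line P21 A4 0 1 (c_P21_0.trans c_A4_1.symm), line P21 A1 1 0 (c_P21_1.trans c_A1_0.symm)] at hP21
  have hP22 := tfacts P22
  rw [line P22 A13 0 2 (c_P22_0.trans c_A13_2.symm), line P22 A4 1 2 (c_P22_1.trans c_A4_2.symm)] at hP22
  have hP23 := tfacts P23
  rw [line P23 A13 0 2 (c_P23_0.trans c_A13_2.symm), line P23 A9 1 2 (c_P23_1.trans c_A9_2.symm)] at hP23
  exact ks_core ((Fh A2 z0).1 0) ((Fh A3 z0).1 0) ((Fh A10 z0).1 0) ((Fh A0 z0).1 0) ((Fh A10 z0).1 1) ((Fh A2 z0).1 1) ((Fh A3 z0).1 1) ((Fh A0 z0).1 1) ((Fh A13 z0).1 1) ((Fh A15 z0).1 1) ((Fh A8 z0).1 1) ((Fh A14 z0).1 1) ((Fh A9 z0).1 1) ((Fh A8 z0).1 2) ((Fh A4 z0).1 1) ((Fh A13 z0).1 2) ((Fh A12 z0).1 0) ((Fh A6 z0).1 0) ((Fh A12 z0).1 1) ((Fh A11 z0).1 0) ((Fh A4 z0).1 2) ((Fh A1 z0).1 0) ((Fh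 A1 z0).1 1) ((Fh A9 z0).1 2) ((Fh A0 z0).1 2) ((Fh A14 z0).1 2) ((Fh A5 z0).1 2) ((Fh A11 z0).1 2) ((Fh A15 z0).1 2) ((Fh A1 z0).1 2) ((Fh A6 z0).1 1) ((Fh A7 z0).1 2) ((Fh A6 z0).1 2) (hA2.2.1) (hA3.2.1) (hA10.2.1) (hA0.2.1) (hA10.2.2.1) (hA2.2.2.1) (hA3.2.2.1) (hA0.2.2.1) (hA13.2.2.1) (hA15.2.2.1) (hA8.2.2.1) (hA14.2.2.1) (hA9.2.2.1) (hA8.2.2.2) (hA4.2.2.1) (hA13.2.2.2) (hA12.2.1) (hA6.2.1) (hA12.2.2.1) (hA11.2.1) (hA4.2.2.2) (hA1.2.1) (hA1.2.2.1) (hA9.2.2.2) (hA0.2.2.2) (hA14.2.2.2) (hA5.2.2.2) (hA11.2.2.2) (hA15.2.2.2) (hA1.2.2.2) (hA6.2.2.1) (hA7.2.2.2) (hA6.2.2.2) (hA0.1) (hA1.1) (hA2.1) (hA3.1) (hA4.1) (hA5.1) (hA6.1) (hA7.1) (hA8.1) (hA9.1) (hA10.1) (hA11.1) (hA12.1) (hA13.1)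 (hA14.1) (hA15.1) (pair_ge _ _ _ hP0) (pair_ge _ _ _ hP1) (pair_ge _ _ _ hP2) (pair_ge _ _ _ hP3) (pair_ge _ _ _ hP4) (pair_ge _ _ _ hP5) (pair_ge _ _ _ hP6) (pair_ge _ _ _ hP7) (pair_ge _ _ _ hP8) (pair_ge _ _ _ hP9) (pair_ge _ _ _ hP10) (pair_ge _ _ _ hP11) (pair_ge _ _ _ hP12) (pair_ge _ _ _ hP13) (pair_ge _ _ _ hP14) (pair_ge _ _ _ hP15) (pair_ge _ _ _ hP16) (pair_ge _ _ _ hP17) (pair_ge _ _ _ hP18) (pair_ge _ _ _ hP19) (pair_ge _ _ _ hP20) (pair_ge _ _ _ hP21) (pair_ge _ _ _ hP22) (pair_ge _ _ _ hP23)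
end
end

section
/- Suppose 𝓞 ⊆ 𝓕 is a set of frames that is dense in 𝓕 (for every frame (a₁,a₂,a₃) and every ε > 0 there is a frame (b₁,b₂,b₃) ∈ 𝓞 such that for each i there is a j with min(‖aᵢ - bⱼ‖, ‖aᵢ + bⱼ‖) < ε), and suppose there exist a type X, surjective functions A : X → 𝓞 and B : X → 𝓞, functions F, G : X → T, a type X_Z and functions Z : X → X_Z, F̂ : 𝓞 × X_Z → T, Ĝ : 𝓞 × X_Z → T satisfying Parameter Independence (F(x) = F̂(A(x), Z(x)) and G(x) = Ĝ(B(x), Z(x)) for all x), Freedom (x ↦ (A(x), B(x), Z(x)) is surjective onto 𝓞 × 𝓞 × X_Z), and Nature (for all 𝐚, 𝐛 ∈ 𝓞 and z ∈ X_Z, if aᵢ = ±bⱼ for some i, j then F̂ᵢ(𝐚, z) = Ĝⱼ(𝐛, z)). Then for every z ∈ X_Z and every ε > 0 there exist frames 𝐚, 𝐚' ∈ 𝓞 and indices i, j such that aᵢ ≠ ±a'ⱼ, min(‖aᵢ - a'ⱼ‖, ‖aᵢ + a'ⱼ‖) < ε, and F̂ᵢ(𝐚, z) ≠ F̂ⱼ(𝐚',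 z). -/
noncomputable section

lemma lineDist_tri (x y z : V3) :
    min ‖x - z‖ ‖x + z‖ ≤ min ‖x - y‖ ‖x + y‖ + min ‖y - z‖ ‖y + z‖ := by
  rcases min_cases ‖x - y‖ ‖x + y‖ with ⟨h, _⟩ | ⟨h, _⟩ <;>
    rcases min_cases ‖y - z‖ ‖y + z‖ with ⟨h', _⟩ | ⟨h', _⟩ <;> rw [h, h']
  · exact min_le_of_left_le (by calc ‖x - z‖ = ‖(x - y) + (y - z)‖ := by abel_nf
      _ ≤ _ := norm_add_le _ _)
  · exact min_le_of_right_le (by calc ‖x + z‖ = ‖(x - y) + (y + z)‖ := by abel_nf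
      _ ≤ _ := norm_add_le _ _)
  · exact min_le_of_right_le (by calc ‖x + z‖ = ‖(x + y) - (y - z)‖ := by abel_nf
      _ ≤ _ := norm_sub_le _ _)
  · exact min_le_of_left_le (by calc ‖x - z‖ = ‖(x + y) - (y + z)‖ := by abel_nf
      _ ≤ _ := norm_sub_le _ _)

lemma lineDist_symm (x y : V3) : min ‖x - y‖ ‖x + y‖ = min ‖y - x‖ ‖y + x‖ := by
  rw [norm_sub_rev, add_comm]

lemma rot_orthonormal (b : Fin 3 → V3) (hb : Orthonormal ℝ b) (i j k : Fin 3)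
    (hij : i ≠ j) (hki : k ≠ i) (hkj : k ≠ j) (t : ℝ) :
    Orthonormal ℝ ![Real.cos t • b i + Real.sin t • b j,
      -Real.sin t • b i + Real.cos t • b j, b k] := by
  have h2 : ∀ (h : (2:ℕ) < 3), (⟨2, h⟩ : Fin 3) = 2 := fun _ => rfl
  rw [orthonormal_iff_ite] at hb ⊢
  intro m n
  fin_cases m <;> fin_cases n <;>
    simp only [h2, Matrix.cons_val_zero, Matrix.cons_val_one, Matrix.head_cons,
      Matrix.cons_val_two, Matrix.tail_cons, Fin.mk_zero, Fin.mk_one,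
      inner_add_left, inner_add_right, real_inner_smul_left, real_inner_smul_right, hb,
      hij, Ne.symm hij, hki, hkj, Ne.symm hki, Ne.symm hkj,
      eq_self_iff_true, if_true, if_false, ite_true, ite_false,
      mul_one, mul_zero, add_zero, zero_add, neg_mul, neg_zero] <;>
    norm_num [Fin.ext_iff] <;>
    nlinarith [Real.sin_sq_add_cos_sq t]

/-- Theorem 4 of the paper: in any deterministic model over a dense set `O` of frames
satisfying Parameter Independence, Freedom and Nature, the value assignments must differ
on some pair of distinct but arbitrarily close (hence empirically indistinguishable)
directions; i.e. Nature_FP fails. -/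
theorem conway_kochen_finite_precision
    (O : Set Frame)
    (hdense : ∀ a : Frame, ∀ ε : ℝ, 0 < ε → ∃ b ∈ O, ∀ i : Fin 3, ∃ j : Fin 3,
        min ‖a.1 i - b.1 j‖ ‖a.1 i + b.1 j‖ < ε)
    (X XZ : Type)
    (A : X → ↥O) (B : X → ↥O)
    (hA : Function.Surjective A) (hB : Function.Surjective B)
    (F G : X → ↥Tset) (Z : X → XZ)
    (Fh : ↥O → XZ → ↥Tset) (Gh : ↥O → XZ → ↥Tset)
    (hPIF : ∀ x : X, F x = Fh (A x) (Z x))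
    (hPIG : ∀ x : X, G x = Gh (B x) (Z x))
    (hFree : Function.Surjective (fun x : X => (A x, B x, Z x)))
    (hNature : ∀ (a b : ↥O) (z : XZ) (i j : Fin 3),
        SameLine (a.1.1 i) (b.1.1 j) → (Fh a z).1 i = (Gh b z).1 j) :
    ∀ z : XZ, ∀ ε : ℝ, 0 < ε → ∃ a a' : ↥O, ∃ i j : Fin 3,
      ¬ SameLine (a.1.1 i) (a'.1.1 j) ∧
      min ‖a.1.1 i - a'.1.1 j‖ ‖a.1.1 i + a'.1.1 j‖ < ε ∧
      (Fh a z).1 i ≠ (Fh a' z).1 j := by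
  intro z ε hε
  by_contra hcon
  push_neg at hcon
  -- close directions get equal values
  have key : ∀ (a a' : ↥O) (i j : Fin 3),
      min ‖a.1.1 i - a'.1.1 j‖ ‖a.1.1 i + a'.1.1 j‖ < ε →
      (Fh a z).1 i = (Fh a' z).1 j := by
    intro a a' i j hd
    by_cases hs : SameLine (a.1.1 i) (a'.1.1 j)
    · have h1 := hNature a a' z i j hs
      have h2 := hNature a' a' z j j (Or.inl rfl)
      exact h1.trans h2.symm
    · exact hcon a a' i j hs hd
  -- get some frame in O
  obtain ⟨b0, hb0O, -⟩ := hdense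
    ⟨_, (EuclideanSpace.basisFun (Fin 3) ℝ).orthonormal⟩ 1 one_pos
  set a : ↥O := ⟨b0, hb0O⟩ with ha
  -- two indices with different values
  obtain ⟨i, j, k, hij, hki, hkj, hvij⟩ :
      ∃ i j k : Fin 3, i ≠ j ∧ k ≠ i ∧ k ≠ j ∧ (Fh a z).1 i ≠ (Fh a z).1 j := by
    have h := (Fh a z).2
    simp only [Tset, Set.mem_insert_iff, Set.mem_singleton_iff] at h
    rcases h with h | h | h
    · exact ⟨0, 2, 1, by decide, by decide, by decide, by rw [h]; decide⟩
    · exact ⟨0, 1, 2, by decide, by decide, by decide, by rw [h]; decide⟩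
    · exact ⟨0, 1, 2, by decide, by decide, by decide, by rw [h]; decide⟩
  set bv : Fin 3 → V3 := a.1.1 with hbv
  have hb : Orthonormal ℝ bv := a.1.2
  set u : ℝ → V3 := fun t => Real.cos t • bv i + Real.sin t • bv j with huu
  let c : ℝ → Frame := fun t =>
    ⟨![u t, -Real.sin t • bv i + Real.cos t • bv j, bv k],
      rot_orthonormal bv hb i j k hij hki hkj t⟩
  have hε4 : (0:ℝ) < ε / 4 := by linarith
  choose d hdO hclose using fun t : ℝ => hdense (c t) (ε/4) hε4
  choose jx hjx using fun t : ℝ => hclose t 0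
  set D : ℝ → ↥O := fun t => ⟨d t, hdO t⟩ with hD
  set e : ℝ → V3 := fun t => (d t).1 (jx t) with he
  set val : ℝ → ℕ := fun t => (Fh (D t) z).1 (jx t) with hval
  have hcu : ∀ t : ℝ, (c t).1 0 = u t := fun t => rfl
  have hjx' : ∀ t : ℝ, min ‖u t - e t‖ ‖u t + e t‖ < ε/4 := by
    intro t; have := hjx t; rwa [hcu] at this
  -- Lipschitz bound on u
  have hulip : ∀ s t : ℝ, ‖u s - u t‖ ≤ 2 * |s - t| := by
    intro s t
    have hrepr : u s - u t
        = (Real.cos s - Real.cos t) • bv i + (Real.sin s - Real.sin t) • bv j := by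
      simp only [huu]; module
    have habs : |(s - t)/2| = |s - t|/2 := by rw [abs_div]; norm_num
    have hc : |Real.cos s - Real.cos t| ≤ |s - t| := by
      rw [Real.cos_sub_cos, abs_mul, abs_mul]
      have h1 : |Real.sin ((s + t)/2)| ≤ 1 := Real.abs_sin_le_one _
      have h2 : |Real.sin ((s - t)/2)| ≤ |s - t|/2 := habs ▸ Real.abs_sin_le_abs
      have h3 : (0:ℝ) ≤ |Real.sin ((s + t)/2)| := abs_nonneg _
      have h4 : (0:ℝ) ≤ |Real.sin ((s - t)/2)| := abs_nonneg _
      rw [show |(-2 : ℝ)| = 2 by norm_num]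
      nlinarith
    have hs : |Real.sin s - Real.sin t| ≤ |s - t| := by
      rw [Real.sin_sub_sin, abs_mul, abs_mul]
      have h1 : |Real.cos ((s + t)/2)| ≤ 1 := Real.abs_cos_le_one _
      have h2 : |Real.sin ((s - t)/2)| ≤ |s - t|/2 := habs ▸ Real.abs_sin_le_abs
      have h3 : (0:ℝ) ≤ |Real.cos ((s + t)/2)| := abs_nonneg _
      have h4 : (0:ℝ) ≤ |Real.sin ((s - t)/2)| := abs_nonneg _
      rw [show |(2 : ℝ)| = 2 by norm_num]
      nlinarith
    calc ‖u s - u t‖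
        = ‖(Real.cos s - Real.cos t) • bv i + (Real.sin s - Real.sin t) • bv j‖ := by
          rw [hrepr]
      _ ≤ ‖(Real.cos s - Real.cos t) • bv i‖ + ‖(Real.sin s - Real.sin t) • bv j‖ :=
          norm_add_le _ _
      _ = |Real.cos s - Real.cos t| + |Real.sin s - Real.sin t| := by
          rw [norm_smul, norm_smul, hb.1 i, hb.1 j]; simp [Real.norm_eq_abs]
      _ ≤ 2 * |s - t| := by linarith
  -- small steps preserve the value
  have step : ∀ s t : ℝ, |s - t| ≤ ε/8 → val s = val t := by
    intro s t hst
    apply key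
    have h1 : min ‖e s - u s‖ ‖e s + u s‖ < ε/4 := by
      rw [lineDist_symm]; exact hjx' s
    have h2 : min ‖u s - u t‖ ‖u s + u t‖ ≤ 2 * |s - t| :=
      le_trans (min_le_left _ _) (hulip s t)
    have h3 : min ‖u t - e t‖ ‖u t + e t‖ < ε/4 := hjx' t
    have t1 := lineDist_tri (e s) (u s) (e t)
    have t2 := lineDist_tri (u s) (u t) (e t)
    have : min ‖e s - e t‖ ‖e s + e t‖ < ε := by
      have : 2 * |s - t| ≤ ε/4 := by linarith
      linarith
    exact this
  -- value is constant along arithmetic progressions with small step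
  have chain : ∀ δ : ℝ, 0 ≤ δ → δ ≤ ε/8 → ∀ n : ℕ, val 0 = val (n * δ) := by
    intro δ hδ0 hδ n
    induction n with
    | zero => norm_num
    | succ n ih =>
        rw [ih]
        apply step
        have : ((n:ℝ)+1) * δ - n * δ = δ := by ring
        push_cast
        rw [abs_sub_comm, this, abs_of_nonneg hδ0]
        exact hδ
  -- choose the number of steps
  have hεpos : (0:ℝ) < ε/8 := by linarith
  obtain ⟨N, hN⟩ := exists_nat_gt (Real.pi/2 / (ε/8))
  have hpi : (0:ℝ) < Real.pi/2 := by positivity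
  have hNpos : (0:ℝ) < N := lt_trans (by positivity) hN
  have hNne : (N:ℝ) ≠ 0 := ne_of_gt hNpos
  set δ : ℝ := Real.pi/2 / N with hδ
  have hδ0 : 0 ≤ δ := by positivity
  have hδε : δ ≤ ε/8 := by
    have h' : Real.pi/2 < (N:ℝ) * (ε/8) := (div_lt_iff₀ hεpos).mp hN
    rw [hδ, div_le_iff₀ hNpos]
    nlinarith
  have hNδ : (N:ℝ) * δ = Real.pi/2 := by
    rw [hδ]; field_simp
  -- endpoints
  have hend0 : (Fh a z).1 i = val 0 := by
    apply key a (D 0) i (jx 0)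
    have h0 : u 0 = bv i := by simp [huu]
    have := hjx' 0
    rw [h0] at this
    calc min ‖bv i - e 0‖ ‖bv i + e 0‖ < ε/4 := this
      _ < ε := by linarith
  have hend1 : (Fh a z).1 j = val (Real.pi/2) := by
    apply key a (D (Real.pi/2)) j (jx (Real.pi/2))
    have h0 : u (Real.pi/2) = bv j := by simp [huu]
    have := hjx' (Real.pi/2)
    rw [h0] at this
    calc min ‖bv j - e (Real.pi/2)‖ ‖bv j + e (Real.pi/2)‖ < ε/4 := this
      _ < ε := by linarith
  apply hvij
  rw [hend0, hend1, ← hNδ]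
  exact chain δ hδ0 hδε N
end
end
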